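/- arXiv:1508.00609 — 13 statements merged into one kernel-verified Lean document; each statement's English description precedes it below -/
import Mathlib

section
/- (Turán-type identity for aₙ) For all n ≥ 1, aₙ² − aₙ₋₁·aₙ₊₁ = −p·b₀²·(a₁² − b₀²p)^{n−1}. In particular if p is not the square of a polynomial and b₀ ≠ 0 and a₁² − b₀²p ≠ 0, then aₙ² − aₙ₋₁aₙ₊₁ ≠ 0. -/
open Polynomial

private lemma turan_key (p u v u' v' : Polynomial ℂ)
    (h : AdjoinRoot.of ((X : Polynomial (Polynomial ℂ)) ^ 2 - C p) u +
        AdjoinRoot.of (X ^ 2 - C p) v * AdjoinRoot.root (X ^ 2 - C p) =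
      AdjoinRoot.of (X ^ 2 - C p) u' +
        AdjoinRoot.of (X ^ 2 - C p) v' * AdjoinRoot.root (X ^ 2 - C p)) :
    u = u' ∧ v = v' := by
  set f : Polynomial (Polynomial ℂ) := X ^ 2 - C p with hf
  have hmk : AdjoinRoot.mk f (C u + C v * X) = AdjoinRoot.mk f (C u' + C v' * X) := by
    simpa [map_add, map_mul, AdjoinRoot.mk_C, AdjoinRoot.mk_X] using h
  rw [AdjoinRoot.mk_eq_mk] at hmk
  have hdeg : ((C u + C v * X) - (C u' + C v' * X)).degree < f.degree := by
    have h2 : f.degree = 2 := degree_X_pow_sub_C (by norm_num) p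
    have : ((C u + C v * X) - (C u' + C v' * X)) = C (v - v') * X + C (u - u') := by
      push_cast [C_sub]; ring
    rw [h2, this]
    exact lt_of_le_of_lt degree_linear_le (by norm_num)
  have h0 := Polynomial.eq_zero_of_dvd_of_degree_lt hmk hdeg
  have h0' : C (v - v') * X + C (u - u') = 0 := by
    rw [← h0]; push_cast [C_sub]; ring
  constructor
  · have := congrArg (fun q => Polynomial.coeff q 0) h0'
    simpa [sub_eq_zero] using this
  · have := congrArg (fun q => Polynomial.coeff q 1) h0'
    simpa [sub_eq_zero] using this

theorem turan_identity_an (p : Polynomial ℂ) (a b : ℕ → Polynomial ℂ)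
    (ha0 : a 0 = 1)
    (hdef : ∀ n : ℕ,
      AdjoinRoot.of ((X : Polynomial (Polynomial ℂ)) ^ 2 - C p) (a (n + 1)) +
        AdjoinRoot.of (X ^ 2 - C p) (b n) * AdjoinRoot.root (X ^ 2 - C p) =
      (AdjoinRoot.of (X ^ 2 - C p) (a 1) +
        AdjoinRoot.of (X ^ 2 - C p) (b 0) * AdjoinRoot.root (X ^ 2 - C p)) ^ (n + 1)) :
    (∀ n : ℕ, a (n + 1) ^ 2 - a n * a (n + 2) = -(p * b 0 ^ 2) * (a 1 ^ 2 - b 0 ^ 2 * p) ^ n) ∧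
      ((¬ ∃ q : Polynomial ℂ, p = q ^ 2) → b 0 ≠ 0 → a 1 ^ 2 - b 0 ^ 2 * p ≠ 0 →
        ∀ n : ℕ, a (n + 1) ^ 2 - a n * a (n + 2) ≠ 0) := by
  set f : Polynomial (Polynomial ℂ) := X ^ 2 - C p with hf
  have hr2 : (AdjoinRoot.root f) ^ 2 = AdjoinRoot.of f p := by
    have h := AdjoinRoot.mk_self (f := f)
    rw [hf, map_sub, map_pow, AdjoinRoot.mk_X, AdjoinRoot.mk_C, sub_eq_zero] at h
    exact h
  -- the recurrences
  have hrec : ∀ n : ℕ, a (n + 2) = a 1 * a (n + 1) + p * b 0 * b n ∧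
      b (n + 1) = a 1 * b n + b 0 * a (n + 1) := by
    intro n
    have h1 := hdef (n + 1)
    have h2 := hdef n
    rw [pow_succ, ← h2] at h1
    have h1' : AdjoinRoot.of f (a (n + 2)) + AdjoinRoot.of f (b (n + 1)) * AdjoinRoot.root f =
        AdjoinRoot.of f (a 1 * a (n + 1) + p * b 0 * b n) +
          AdjoinRoot.of f (a 1 * b n + b 0 * a (n + 1)) * AdjoinRoot.root f := by
      rw [h1, map_add, map_add, map_mul, map_mul, map_mul, map_mul, map_mul, ← hr2]
      ring
    exact turan_key p _ _ _ _ h1'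
  -- norm identity
  have hnorm : ∀ n : ℕ, a (n + 1) ^ 2 - p * b n ^ 2 = (a 1 ^ 2 - b 0 ^ 2 * p) ^ (n + 1) := by
    intro n
    induction n with
    | zero => ring
    | succ k ih =>
      obtain ⟨ha, hb⟩ := hrec k
      rw [ha, hb]
      linear_combination (a 1 ^ 2 - b 0 ^ 2 * p) * ih
  have main : ∀ n : ℕ, a (n + 1) ^ 2 - a n * a (n + 2) =
      -(p * b 0 ^ 2) * (a 1 ^ 2 - b 0 ^ 2 * p) ^ n := by
    intro n
    induction n with
    | zero =>
      obtain ⟨ha, _⟩ := hrec 0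
      rw [ha, ha0]
      ring
    | succ k ih =>
      obtain ⟨ha1, hb1⟩ := hrec k
      obtain ⟨ha2, _⟩ := hrec (k + 1)
      have hn := hnorm k
      rw [ha2, hb1]
      calc a (k + 2) ^ 2 - a (k + 1) * (a 1 * a (k + 2) + p * b 0 * (a 1 * b k + b 0 * a (k + 1)))
          = (a 1 * a (k + 1) + p * b 0 * b k) ^ 2 -
              a (k + 1) * (a 1 * (a 1 * a (k + 1) + p * b 0 * b k) +
                p * b 0 * (a 1 * b k + b 0 * a (k + 1))) := by rw [ha1]
        _ = -(p * b 0 ^ 2) * (a (k + 1) ^ 2 - p * b k ^ 2) := by ring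
        _ = -(p * b 0 ^ 2) * (a 1 ^ 2 - b 0 ^ 2 * p) ^ (k + 1) := by rw [hn]
  refine ⟨main, fun hsq hb0 hN n => ?_⟩
  rw [main n]
  have hp : p ≠ 0 := fun h => hsq ⟨0, by simp [h]⟩
  exact mul_ne_zero (neg_ne_zero.mpr (mul_ne_zero hp (pow_ne_zero _ hb0))) (pow_ne_zero _ hN)
end

section
/- (Mixed product formula) For all integers m ≥ n ≥ 0, bₘ·aₙ = (1/2)·(b_{m+n} + (a₁² − b₀²p)ⁿ · b_{m−n}). -/
open Polynomial

private noncomputable abbrev mpfF (p : Polynomial ℂ) : Polynomial (Polynomial ℂ) :=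
  X ^ 2 - C p

private lemma mpf_root_sq (p : Polynomial ℂ) :
    (AdjoinRoot.root (mpfF p)) ^ 2 = AdjoinRoot.of (mpfF p) p := by
  have h := AdjoinRoot.eval₂_root (mpfF p)
  simp only [mpfF, eval₂_sub, eval₂_pow, eval₂_X, eval₂_C, sub_eq_zero] at h
  exact h

private lemma mpf_inj (p x y x' y' : Polynomial ℂ)
    (h : AdjoinRoot.of (mpfF p) x + AdjoinRoot.of (mpfF p) y * AdjoinRoot.root (mpfF p)
      = AdjoinRoot.of (mpfF p) x' + AdjoinRoot.of (mpfF p) y' * AdjoinRoot.root (mpfF p)) :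
    x = x' ∧ y = y' := by
  have h' : AdjoinRoot.mk (mpfF p) (C x + C y * X) = AdjoinRoot.mk (mpfF p) (C x' + C y' * X) := by
    rw [map_add, map_add, map_mul, map_mul, AdjoinRoot.mk_C, AdjoinRoot.mk_C,
      AdjoinRoot.mk_C, AdjoinRoot.mk_C, AdjoinRoot.mk_X]
    exact h
  rw [AdjoinRoot.mk_eq_mk] at h'
  have hdeg : ((C x + C y * X) - (C x' + C y' * X)).degree < (mpfF p).degree := by
    rw [mpfF, degree_X_pow_sub_C (by norm_num : 0 < 2)]
    have h1 : ((C x + C y * X) - (C x' + C y' * X)).degree ≤ 1 := by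
      apply le_trans (degree_sub_le _ _)
      simp only [max_le_iff]
      constructor <;> apply le_trans (degree_add_le _ _) <;> simp only [max_le_iff] <;>
        constructor
      · exact le_trans (degree_C_le) (by norm_num)
      · exact le_trans (degree_mul_le _ _) (by
          simpa using add_le_add degree_C_le (le_refl (degree (X : (Polynomial ℂ)[X]))))
      · exact le_trans (degree_C_le) (by norm_num)
      · exact le_trans (degree_mul_le _ _) (by
          simpa using add_le_add degree_C_le (le_refl (degree (X : (Polynomial ℂ)[X]))))
    exact lt_of_le_of_lt h1 (by norm_num)
  have hz := Polynomial.eq_zero_of_dvd_of_degree_lt h' hdeg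
  have hz' : C (x - x') + C (y - y') * X = 0 := by
    rw [← hz]; ring_nf; simp [map_sub]; ring
  constructor
  · have := congrArg (fun q => Polynomial.coeff q 0) hz'
    simpa [sub_eq_zero] using this
  · have := congrArg (fun q => Polynomial.coeff q 1) hz'
    simpa [sub_eq_zero] using this

private noncomputable def mpfConj (p : Polynomial ℂ) :
    AdjoinRoot (mpfF p) →+* AdjoinRoot (mpfF p) :=
  AdjoinRoot.lift (AdjoinRoot.of (mpfF p)) (-(AdjoinRoot.root (mpfF p))) (by
    simp [mpfF, eval₂_sub, eval₂_pow, eval₂_X, eval₂_C, neg_sq, mpf_root_sq p])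

private lemma mpfConj_of (p x : Polynomial ℂ) :
    mpfConj p (AdjoinRoot.of (mpfF p) x) = AdjoinRoot.of (mpfF p) x :=
  AdjoinRoot.lift_of _

private lemma mpfConj_root (p : Polynomial ℂ) :
    mpfConj p (AdjoinRoot.root (mpfF p)) = -(AdjoinRoot.root (mpfF p)) :=
  AdjoinRoot.lift_root _

theorem mixed_product_formula (p : Polynomial ℂ) (a b : ℕ → Polynomial ℂ)
    (ha0 : a 0 = 1)
    (hdef : ∀ n : ℕ,
      AdjoinRoot.of ((X : Polynomial (Polynomial ℂ)) ^ 2 - C p) (a (n + 1)) +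
        AdjoinRoot.of (X ^ 2 - C p) (b n) * AdjoinRoot.root (X ^ 2 - C p) =
      (AdjoinRoot.of (X ^ 2 - C p) (a 1) +
        AdjoinRoot.of (X ^ 2 - C p) (b 0) * AdjoinRoot.root (X ^ 2 - C p)) ^ (n + 1)) :
    ∀ m n : ℕ, n ≤ m →
      2 * (b m * a n) = b (m + n) + (a 1 ^ 2 - b 0 ^ 2 * p) ^ n * b (m - n) := by
  intro m n hnm
  set F := mpfF p with hF
  set of := AdjoinRoot.of F with hof
  set r := AdjoinRoot.root F with hr
  set z := of (a 1) + of (b 0) * r with hz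
  have hdef' : ∀ k : ℕ, of (a (k + 1)) + of (b k) * r = z ^ (k + 1) := hdef
  set w := mpfConj p z with hw
  have hwz : w = of (a 1) - of (b 0) * r := by
    rw [hw, hz, map_add, map_mul, mpfConj_of, mpfConj_of, mpfConj_root]; ring
  have hr2 : r ^ 2 = of p := mpf_root_sq p
  set c : Polynomial ℂ := a 1 ^ 2 - b 0 ^ 2 * p with hc
  have hzw : z * w = of c := by
    rw [hz, hwz, hc, map_sub, map_mul, map_pow, map_pow]
    rw [show (of (a 1) + of (b 0) * r) * (of (a 1) - of (b 0) * r)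
        = of (a 1) ^ 2 - of (b 0) ^ 2 * r ^ 2 by ring, hr2]
  have hwpow : ∀ k : ℕ, w ^ (k + 1) = of (a (k + 1)) - of (b k) * r := by
    intro k
    rw [hw, ← map_pow, ← hdef' k, map_add, map_mul, mpfConj_of, mpfConj_of, mpfConj_root]
    ring
  have hsum : z ^ n + w ^ n = 2 * of (a n) := by
    cases n with
    | zero => simp [ha0]; norm_num
    | succ k => rw [← hdef' k, hwpow k]; ring
  have key : of (2 * (a (m + 1) * a n)) + of (2 * (b m * a n)) * r
      = of (a (m + n + 1) + c ^ n * a (m - n + 1)) + of (b (m + n) + c ^ n * b (m - n)) * r := by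
    have e1 : of (2 * (a (m + 1) * a n)) + of (2 * (b m * a n)) * r
        = z ^ (m + 1) * (z ^ n + w ^ n) := by
      rw [hsum, ← hdef' m, map_mul, map_mul, map_mul, map_mul, map_ofNat]
      ring
    have e2 : z ^ (m + 1) * z ^ n = z ^ (m + n + 1) := by
      rw [← pow_add]; ring_nf
    have e3 : z ^ (m + 1) * w ^ n = of (c ^ n) * z ^ (m - n + 1) := by
      have hsplit : z ^ (m + 1) = z ^ n * z ^ (m - n + 1) := by
        rw [← pow_add]; congr 1; omega
      calc z ^ (m + 1) * w ^ n = (z * w) ^ n * z ^ (m - n + 1) := by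
            rw [hsplit, mul_pow]; ring
        _ = of (c ^ n) * z ^ (m - n + 1) := by rw [hzw, map_pow]
    rw [e1, mul_add, e2, e3, ← hdef' (m + n), ← hdef' (m - n)]
    rw [map_add, map_add, map_mul, map_mul]
    ring
  exact (mpf_inj p _ _ _ _ key).2
end

section
/- (Product formula, second kind) For all integers m ≥ n ≥ 0, p·bₘ·bₙ = (1/2)·(a_{m+n+2} − (a₁² − b₀²p)^{n+1} · a_{m−n}). -/
open Polynomial

private lemma pf_bn_root_sq (p : Polynomial ℂ) :
    (AdjoinRoot.root ((X : Polynomial (Polynomial ℂ)) ^ 2 - C p)) ^ 2 =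
      AdjoinRoot.of (X ^ 2 - C p) p := by
  have := AdjoinRoot.eval₂_root ((X : Polynomial (Polynomial ℂ)) ^ 2 - C p)
  simpa [sub_eq_zero] using this

private lemma pf_bn_ev (p : Polynomial ℂ) :
    ((X : Polynomial (Polynomial ℂ)) ^ 2 - C p).eval₂
      (AdjoinRoot.of (X ^ 2 - C p)) (-AdjoinRoot.root (X ^ 2 - C p)) = 0 := by
  simp [neg_pow, pf_bn_root_sq p, sub_eq_zero]

theorem product_formula_bn (p : Polynomial ℂ) (a b : ℕ → Polynomial ℂ)
    (ha0 : a 0 = 1)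
    (hdef : ∀ n : ℕ,
      AdjoinRoot.of ((X : Polynomial (Polynomial ℂ)) ^ 2 - C p) (a (n + 1)) +
        AdjoinRoot.of (X ^ 2 - C p) (b n) * AdjoinRoot.root (X ^ 2 - C p) =
      (AdjoinRoot.of (X ^ 2 - C p) (a 1) +
        AdjoinRoot.of (X ^ 2 - C p) (b 0) * AdjoinRoot.root (X ^ 2 - C p)) ^ (n + 1)) :
    ∀ m n : ℕ, n ≤ m →
      2 * (p * b m * b n) = a (m + n + 2) - (a 1 ^ 2 - b 0 ^ 2 * p) ^ (n + 1) * a (m - n) := by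
  have hdeg : ((X : Polynomial (Polynomial ℂ)) ^ 2 - C p).degree = 2 := by
    simpa using Polynomial.degree_X_pow_sub_C (by norm_num : 0 < 2) p
  have hinj : Function.Injective (AdjoinRoot.of ((X : Polynomial (Polynomial ℂ)) ^ 2 - C p)) :=
    AdjoinRoot.of.injective_of_degree_ne_zero (by rw [hdeg]; norm_num)
  set r := AdjoinRoot.root ((X : Polynomial (Polynomial ℂ)) ^ 2 - C p) with hrdef
  set F := AdjoinRoot.of ((X : Polynomial (Polynomial ℂ)) ^ 2 - C p) with hFdef
  have hr : r ^ 2 = F p := pf_bn_root_sq p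
  have hev := pf_bn_ev p
  set σ := AdjoinRoot.lift F (-r) hev with hσ
  have hσof : ∀ q : Polynomial ℂ, σ (F q) = F q := fun q => AdjoinRoot.lift_of hev
  have hσr : σ r = -r := AdjoinRoot.lift_root hev
  set α := F (a 1) + F (b 0) * r with hα
  set β := F (a 1) - F (b 0) * r with hβ
  have hσα : σ α = β := by
    rw [hα, hβ, map_add, map_mul, hσof, hσof, hσr]; ring
  have hA : ∀ n : ℕ, 2 * F (a n) = α ^ n + β ^ n := by
    intro n
    cases n with
    | zero => rw [ha0, map_one]; ring
    | succ k =>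
        have h1 := hdef k
        have h2 := congrArg σ h1
        rw [map_add, map_mul, map_pow, hσof, hσof, hσr, hσα] at h2
        linear_combination h1 + h2
  have hB : ∀ n : ℕ, 2 * (F (b n) * r) = α ^ (n + 1) - β ^ (n + 1) := by
    intro n
    have h1 := hdef n
    have h2 := congrArg σ h1
    rw [map_add, map_mul, map_pow, hσof, hσof, hσr, hσα] at h2
    linear_combination h1 - h2
  have hαβ : α * β = F (a 1 ^ 2 - b 0 ^ 2 * p) := by
    simp only [map_sub, map_mul, map_pow]
    rw [hα, hβ, ← hr]; ring
  clear_value α β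
  intro m n hnm
  obtain ⟨k, rfl⟩ := Nat.exists_eq_add_of_le hnm
  have hmk : n + k - n = k := by omega
  rw [hmk]
  have h2ne : (2 : Polynomial ℂ) ≠ 0 := by norm_num
  apply mul_left_cancel₀ h2ne
  apply hinj
  have lhs : F (2 * (2 * (p * b (n + k) * b n))) =
      (2 * (F (b (n + k)) * r)) * (2 * (F (b n) * r)) := by
    simp only [map_mul, map_ofNat]
    rw [← hr]; ring
  rw [lhs, hB, hB]
  simp only [map_mul, map_sub, map_pow, map_ofNat]
  rw [show F (a 1) ^ 2 - F (b 0) ^ 2 * F p = α * β by rw [hαβ]; simp only [map_sub, map_mul, map_pow]]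
  have hidx : n + k + n + 2 = n + 1 + (n + 1 + k) := by omega
  rw [hidx]
  have hAn := hA (n + 1 + (n + 1 + k))
  have hAk := hA k
  linear_combination (α * β) ^ (n + 1) * hAk - hAn
end

section
/- (Summation formula) For all n ≥ 1, p·b₀·bₙ₋₁ = (aₙ − 1)(a₁ − 1) − (a₁² − b₀²p − 2a₁ + 1)·∑_{k=0}^{n−1} aₖ. -/
open Polynomial

lemma adjoin_inj (p : Polynomial ℂ) (x y x' y' : Polynomial ℂ)
    (h : AdjoinRoot.of ((X : Polynomial (Polynomial ℂ)) ^ 2 - C p) x +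
        AdjoinRoot.of (X ^ 2 - C p) y * AdjoinRoot.root (X ^ 2 - C p) =
      AdjoinRoot.of (X ^ 2 - C p) x' +
        AdjoinRoot.of (X ^ 2 - C p) y' * AdjoinRoot.root (X ^ 2 - C p)) :
    x = x' ∧ y = y' := by
  set f : Polynomial (Polynomial ℂ) := X ^ 2 - C p with hf
  have hmk : AdjoinRoot.mk f (C x + C y * X - (C x' + C y' * X)) = 0 := by
    simp only [map_sub, map_add, map_mul, AdjoinRoot.mk_C, AdjoinRoot.mk_X]
    rw [sub_eq_zero]
    exact h
  have hdvd : f ∣ (C x + C y * X - (C x' + C y' * X)) := AdjoinRoot.mk_eq_zero.1 hmk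
  have hdeg : (C x + C y * X - (C x' + C y' * X)).degree < f.degree := by
    rw [hf, Polynomial.degree_X_pow_sub_C (by norm_num)]
    have key : ∀ u v : Polynomial ℂ,
        (C u + C v * X : Polynomial (Polynomial ℂ)).degree ≤ 1 := by
      intro u v
      apply le_trans (degree_add_le _ _)
      apply max_le (le_trans degree_C_le (by norm_num))
      apply le_trans (degree_mul_le _ _)
      calc (C v : Polynomial (Polynomial ℂ)).degree + (X : Polynomial (Polynomial ℂ)).degree
          ≤ 0 + 1 := add_le_add degree_C_le degree_X_le
        _ = 1 := by norm_num
    apply lt_of_le_of_lt (le_trans (degree_sub_le _ _) (max_le (key x y) (key x' y')))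
    exact_mod_cast one_lt_two
  have hzero := Polynomial.eq_zero_of_dvd_of_degree_lt hdvd hdeg
  have h0 := congrArg (fun q => Polynomial.coeff q 0) hzero
  have h1 := congrArg (fun q => Polynomial.coeff q 1) hzero
  simp [coeff_one, coeff_X, sub_eq_zero] at h0 h1
  exact ⟨h0, h1⟩

theorem summation_formula_an (p : Polynomial ℂ) (a b : ℕ → Polynomial ℂ)
    (ha0 : a 0 = 1)
    (hdef : ∀ n : ℕ,
      AdjoinRoot.of ((X : Polynomial (Polynomial ℂ)) ^ 2 - C p) (a (n + 1)) +
        AdjoinRoot.of (X ^ 2 - C p) (b n) * AdjoinRoot.root (X ^ 2 - C p) =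
      (AdjoinRoot.of (X ^ 2 - C p) (a 1) +
        AdjoinRoot.of (X ^ 2 - C p) (b 0) * AdjoinRoot.root (X ^ 2 - C p)) ^ (n + 1)) :
    ∀ n : ℕ, 1 ≤ n →
      p * b 0 * b (n - 1) =
        (a n - 1) * (a 1 - 1) -
          (a 1 ^ 2 - b 0 ^ 2 * p - 2 * a 1 + 1) * ∑ k ∈ Finset.range n, a k := by
  set f : Polynomial (Polynomial ℂ) := X ^ 2 - C p with hf
  have hroot2 : AdjoinRoot.root f ^ 2 = AdjoinRoot.of f p := by
    have := AdjoinRoot.eval₂_root f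
    rw [hf] at this ⊢
    simp only [eval₂_sub, eval₂_pow, eval₂_X, eval₂_C] at this
    rw [sub_eq_zero] at this
    exact this
  -- recurrence
  have hrec : ∀ n : ℕ, 1 ≤ n →
      a (n + 1) = a 1 * a n + p * (b 0 * b (n - 1)) ∧
      b n = b 0 * a n + a 1 * b (n - 1) := by
    intro n hn
    obtain ⟨m, rfl⟩ : ∃ m, n = m + 1 := ⟨n - 1, by omega⟩
    have h1 := hdef (m + 1)
    have h2 := hdef m
    rw [pow_succ' _ (m + 1), ← h2] at h1
    set z := AdjoinRoot.root f
    set A := fun q : Polynomial ℂ => AdjoinRoot.of f q with hA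
    have hexp : (A (a 1) + A (b 0) * z) * (A (a (m + 1)) + A (b m) * z)
        = A (a 1 * a (m + 1) + p * (b 0 * b m))
          + A (b 0 * a (m + 1) + a 1 * b m) * z := by
      simp only [hA, map_add, map_mul]
      ring_nf
      rw [hroot2]
      ring
    rw [hexp] at h1
    rw [show m + 1 - 1 = m from by omega]
    exact adjoin_inj p _ _ _ _ h1
  intro n hn
  induction n, hn using Nat.le_induction with
  | base =>
      have hbase := hdef 0
      simp [Finset.sum_range_one, ha0]
      ring
  | succ n hn ih =>
      obtain ⟨hA, hB⟩ := hrec n hn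
      rw [Finset.sum_range_succ, show n + 1 - 1 = n from by omega, hB, hA]
      linear_combination ih
end

section
/- (Second summation formula) For all n ≥ 1, b₀·aₙ = b₀ + bₙ₋₁·(a₁ − 1) − (a₁² − b₀²p − 2a₁ + 1)·∑_{k=0}^{n−2} bₖ. -/
open Polynomial

theorem summation_formula_bn (p : Polynomial ℂ) (a b : ℕ → Polynomial ℂ)
    (ha0 : a 0 = 1)
    (hdef : ∀ n : ℕ,
      AdjoinRoot.of ((X : Polynomial (Polynomial ℂ)) ^ 2 - C p) (a (n + 1)) +
        AdjoinRoot.of (X ^ 2 - C p) (b n) * AdjoinRoot.root (X ^ 2 - C p) =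
      (AdjoinRoot.of (X ^ 2 - C p) (a 1) +
        AdjoinRoot.of (X ^ 2 - C p) (b 0) * AdjoinRoot.root (X ^ 2 - C p)) ^ (n + 1)) :
    ∀ n : ℕ, 1 ≤ n →
      b 0 * a n =
        b 0 + b (n - 1) * (a 1 - 1) -
          (a 1 ^ 2 - b 0 ^ 2 * p - 2 * a 1 + 1) * ∑ k ∈ Finset.range (n - 1), b k := by
  set f : Polynomial (Polynomial ℂ) := X ^ 2 - C p with hf
  have hfdeg : f.degree = 2 := by
    simpa [hf] using Polynomial.degree_X_pow_sub_C (by norm_num : 0 < 2) p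
  have hroot : AdjoinRoot.root f ^ 2 = AdjoinRoot.of f p := by
    have h0 : AdjoinRoot.mk f f = 0 := AdjoinRoot.mk_self
    have : AdjoinRoot.mk f (X ^ 2) - AdjoinRoot.mk f (C p) = 0 := by
      rw [← map_sub]; exact h0
    simpa [AdjoinRoot.mk_C, sub_eq_zero] using this
  have key : ∀ A B A' B' : Polynomial ℂ,
      AdjoinRoot.of f A + AdjoinRoot.of f B * AdjoinRoot.root f =
        AdjoinRoot.of f A' + AdjoinRoot.of f B' * AdjoinRoot.root f →
      A = A' ∧ B = B' := by
    intro A B A' B' h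
    have h1 : AdjoinRoot.mk f (C A + C B * X) = AdjoinRoot.mk f (C A' + C B' * X) := by
      simpa [map_add, map_mul, AdjoinRoot.mk_C, AdjoinRoot.mk_X] using h
    rw [AdjoinRoot.mk_eq_mk] at h1
    have h2 : (C A + C B * X) - (C A' + C B' * X) = 0 := by
      refine Polynomial.eq_zero_of_dvd_of_degree_lt h1 ?_
      rw [hfdeg]
      have : (C A + C B * X) - (C A' + C B' * X) = C (B - B') * X + C (A - A') := by
        simp only [map_sub]; ring
      rw [this]
      exact lt_of_le_of_lt (Polynomial.degree_linear_le) (by norm_num)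
    constructor
    · have := congrArg (fun q => Polynomial.coeff q 0) h2
      simpa [sub_eq_zero] using this
    · have := congrArg (fun q => Polynomial.coeff q 1) h2
      simpa [sub_eq_zero] using this
  have hrec : ∀ n : ℕ, a (n + 2) = a 1 * a (n + 1) + b 0 * b n * p ∧
      b (n + 1) = a 1 * b n + b 0 * a (n + 1) := by
    intro n
    have h1 := hdef n
    have h2 := hdef (n + 1)
    rw [pow_succ, ← h1] at h2
    apply key
    rw [h2]
    simp only [map_add, map_mul]
    linear_combination (AdjoinRoot.of f (b 0) * AdjoinRoot.of f (b n)) * hroot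
  intro n hn
  obtain ⟨m, rfl⟩ : ∃ m, n = m + 1 := ⟨n - 1, (Nat.succ_pred_eq_of_pos hn).symm⟩
  clear hn
  simp only [Nat.add_sub_cancel]
  induction m with
  | zero => simp; ring
  | succ k ih =>
    obtain ⟨hA, hB⟩ := hrec k
    rw [show k + 1 + 1 = k + 2 from rfl, hA, hB, Finset.sum_range_succ]
    linear_combination ih
end

section
/- (Chebyshev description, first kind) Suppose a₁² − b₀²p = t^{2r} for some nonnegative integer r. Then for all n ≥ 0, aₙ = t^{rn}·Tₙ(a₁/t^r) as elements of the Laurent polynomial ring ℂ[t, t^{-1}], where Tₙ is the n-th Chebyshev polynomial of the first kind. -/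
open Polynomial

theorem chebyshev_first_kind (p : Polynomial ℂ) (a b : ℕ → Polynomial ℂ) (r : ℕ)
    (ha0 : a 0 = 1)
    (hdef : ∀ n : ℕ,
      AdjoinRoot.of ((X : Polynomial (Polynomial ℂ)) ^ 2 - C p) (a (n + 1)) +
        AdjoinRoot.of (X ^ 2 - C p) (b n) * AdjoinRoot.root (X ^ 2 - C p) =
      (AdjoinRoot.of (X ^ 2 - C p) (a 1) +
        AdjoinRoot.of (X ^ 2 - C p) (b 0) * AdjoinRoot.root (X ^ 2 - C p)) ^ (n + 1))
    (hr : a 1 ^ 2 - b 0 ^ 2 * p = X ^ (2 * r)) :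
    ∀ n : ℕ,
      Polynomial.toLaurent (a n) =
        LaurentPolynomial.T ((r : ℤ) * n) *
          Polynomial.aeval
            (Polynomial.toLaurent (a 1) * LaurentPolynomial.T (-(r : ℤ)))
            (Polynomial.Chebyshev.T ℂ n) := by
  set f : Polynomial (Polynomial ℂ) := X ^ 2 - C p with hf
  have hm : f.Monic := monic_X_pow_sub_C p (by norm_num)
  have hdegf : f.degree = 2 := degree_X_pow_sub_C (by norm_num) p
  -- root squared
  have hroot : AdjoinRoot.root f ^ 2 = AdjoinRoot.of f p := by
    have h0 : AdjoinRoot.mk f f = 0 := AdjoinRoot.mk_self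
    rw [hf, map_sub, map_pow, AdjoinRoot.mk_X, AdjoinRoot.mk_C, sub_eq_zero] at h0
    exact h0
  -- injectivity on the "constant" coordinate
  have hinj : ∀ c d c' d' : Polynomial ℂ,
      AdjoinRoot.of f c + AdjoinRoot.of f d * AdjoinRoot.root f =
        AdjoinRoot.of f c' + AdjoinRoot.of f d' * AdjoinRoot.root f → c = c' := by
    have key : ∀ c d : Polynomial ℂ,
        AdjoinRoot.of f c + AdjoinRoot.of f d * AdjoinRoot.root f =
          AdjoinRoot.mk f (C c + C d * X) := by
      intro c d
      rw [map_add, map_mul, AdjoinRoot.mk_C, AdjoinRoot.mk_C, AdjoinRoot.mk_X]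
    have hdeg : ∀ c d : Polynomial ℂ, (C c + C d * X).degree < f.degree := by
      intro c d
      rw [hdegf]
      refine lt_of_le_of_lt (degree_add_le _ _) ?_
      rw [max_lt_iff]
      constructor
      · exact lt_of_le_of_lt degree_C_le (by decide)
      · refine lt_of_le_of_lt (degree_mul_le _ _) ?_
        refine lt_of_le_of_lt (add_le_add degree_C_le degree_X_le) (by decide)
    intro c d c' d' h
    rw [key, key] at h
    have h2 := congrArg (AdjoinRoot.modByMonicHom hm) h
    rw [AdjoinRoot.modByMonicHom_mk, AdjoinRoot.modByMonicHom_mk,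
      (modByMonic_eq_self_iff hm).mpr (hdeg c d),
      (modByMonic_eq_self_iff hm).mpr (hdeg c' d')] at h2
    have h3 := congrArg (fun q => Polynomial.coeff q 0) h2
    simpa using h3
  -- the auxiliary b-sequence with index shifted
  set bb : ℕ → Polynomial ℂ := fun n => Nat.rec 0 (fun k _ => b k) n with hbb
  set z := AdjoinRoot.of f (a 1) + AdjoinRoot.of f (b 0) * AdjoinRoot.root f with hz
  have hzn : ∀ n : ℕ, AdjoinRoot.of f (a n) + AdjoinRoot.of f (bb n) * AdjoinRoot.root f
      = z ^ n := by
    intro n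
    cases n with
    | zero => simp [ha0, hbb]
    | succ k => exact hdef k
  have hz2 : z ^ 2 = 2 * AdjoinRoot.of f (a 1) * z - AdjoinRoot.of f (X ^ (2 * r)) := by
    rw [← hr]
    rw [hz, map_sub, map_pow, map_mul, map_pow]
    linear_combination (AdjoinRoot.of f (b 0)) ^ 2 * hroot
  -- the polynomial recurrence
  have hrec : ∀ n : ℕ, a (n + 2) = 2 * a 1 * a (n + 1) - X ^ (2 * r) * a n := by
    intro n
    refine hinj _ (bb (n + 2)) _ (2 * a 1 * bb (n + 1) - X ^ (2 * r) * bb n) ?_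
    rw [hzn (n + 2)]
    have : z ^ (n + 2) = (2 * AdjoinRoot.of f (a 1) * z - AdjoinRoot.of f (X ^ (2 * r)))
        * z ^ n := by
      rw [← hz2]; ring
    rw [this, sub_mul, mul_assoc, ← pow_succ', ← hzn (n + 1), ← hzn n]
    simp only [map_sub, map_mul, map_pow, map_ofNat]
    ring
  -- the Laurent polynomial side
  intro n
  induction n using Nat.twoStepInduction with
  | zero =>
    simp [ha0, Polynomial.Chebyshev.T_zero]
  | one =>
    have : (LaurentPolynomial.T ((r : ℤ)) : LaurentPolynomial ℂ) * LaurentPolynomial.T (-(r : ℤ))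
        = 1 := by
      rw [← LaurentPolynomial.T_add]; simp [LaurentPolynomial.T_zero]
    simp only [Nat.cast_one, mul_one, Polynomial.Chebyshev.T_one, aeval_X]
    rw [← mul_assoc, mul_comm (LaurentPolynomial.T ((r : ℤ))) (Polynomial.toLaurent (a 1)),
      mul_assoc, this, mul_one]
  | more n ih1 ih2 =>
    have hcast : ((n + 2 : ℕ) : ℤ) = (n : ℤ) + 2 := by push_cast; ring
    have hcast1 : ((n + 1 : ℕ) : ℤ) = (n : ℤ) + 1 := by push_cast; ring
    rw [hrec n]
    simp only [map_sub, map_mul, map_pow, map_ofNat]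
    rw [ih1, ih2, hcast, Polynomial.Chebyshev.T_add_two, map_sub, map_mul, map_mul, aeval_X,
      map_ofNat]
    rw [hcast1]
    have hx : (Polynomial.toLaurent (X : Polynomial ℂ)) ^ (2 * r)
        = LaurentPolynomial.T ((2 * r : ℕ) : ℤ) := by
      rw [← map_pow, Polynomial.toLaurent_X_pow]
    rw [hx]
    have e1 : (LaurentPolynomial.T ((r : ℤ) * ((n : ℤ) + 2)) : LaurentPolynomial ℂ)
        * LaurentPolynomial.T (-(r : ℤ)) = LaurentPolynomial.T ((r : ℤ) * ((n : ℤ) + 1)) := by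
      rw [← LaurentPolynomial.T_add]; congr 1; ring
    have e2 : (LaurentPolynomial.T (((2 * r : ℕ) : ℤ)) : LaurentPolynomial ℂ)
        * LaurentPolynomial.T ((r : ℤ) * (n : ℤ)) = LaurentPolynomial.T ((r : ℤ) * ((n : ℤ) + 2)) := by
      rw [← LaurentPolynomial.T_add]; congr 1; push_cast; ring
    linear_combination
      (-2 * Polynomial.toLaurent (a 1) *
        Polynomial.aeval (Polynomial.toLaurent (a 1) * LaurentPolynomial.T (-(r : ℤ)))
          (Polynomial.Chebyshev.T ℂ ((n : ℤ) + 1))) * e1 -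
      (Polynomial.aeval (Polynomial.toLaurent (a 1) * LaurentPolynomial.T (-(r : ℤ)))
          (Polynomial.Chebyshev.T ℂ (n : ℤ))) * e2
end

section
/- (Chebyshev description, second kind) Suppose a₁² − b₀²p = t^{2r} for some nonnegative integer r. Then for all n ≥ 0, bₙ = b₀·t^{rn}·Uₙ(a₁/t^r) in ℂ[t, t^{-1}], where Uₙ is the n-th Chebyshev polynomial of the second kind. -/
/-!
Multiplying `a (n + 1) + b n √p` by `a 1 + b 0 √p` and comparing coefficients in the free basis
`1, √p` of `R[X] ⧸ (X² - p)` gives `b (n + 2) = 2 a₁ b (n + 1) - (a₁² - b₀² p) b n`, where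
`a₁² - b₀² p = t^{2r}`. Since `t^r` is a unit of `ℂ[t, t⁻¹]`, the sequence `b₀ t^{rn} Uₙ(a₁ t^{-r})`
satisfies the same recurrence, by the one of `Uₙ`, and has the same first two terms.
-/

open Polynomial

namespace AdjoinRoot

variable {R : Type*} [CommRing R]

theorem root_pow_eq_of_X_pow_sub_C (n : ℕ) (p : R) :
    root (X ^ n - C p) ^ n = of (X ^ n - C p) p := by
  rw [← mk_X, ← map_pow, ← mk_C, mk_eq_mk]

theorem of_add_of_mul_root_X_sq_sub_C_inj [Nontrivial R] {p α β γ δ : R}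
    (h : of (X ^ 2 - C p) α + of (X ^ 2 - C p) β * root (X ^ 2 - C p) =
      of (X ^ 2 - C p) γ + of (X ^ 2 - C p) δ * root (X ^ 2 - C p)) :
    α = γ ∧ β = δ := by
  have hmonic : (X ^ 2 - C p).Monic := monic_X_pow_sub_C p two_ne_zero
  rw [← mk_C, ← mk_C, ← mk_C, ← mk_C, ← mk_X, ← map_mul, ← map_mul, ← map_add, ← map_add,
    mk_eq_mk] at h
  have hlin : C α + C β * X - (C γ + C δ * X) = C (β - δ) * X + C (α - γ) := by
    simp only [C_sub]; ring
  rw [hlin] at h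
  have hzero : C (β - δ) * X + C (α - γ) = 0 := by
    rw [← (modByMonic_eq_zero_iff_dvd hmonic).2 h, eq_comm, modByMonic_eq_self_iff hmonic,
      degree_X_pow_sub_C two_pos]
    exact degree_linear_le.trans_lt (by norm_num)
  have h0 := congrArg (coeff · 0) hzero
  have h1 := congrArg (coeff · 1) hzero
  simp only [coeff_add, coeff_C_mul_X, coeff_C, coeff_zero] at h0 h1
  constructor <;> simp_all [sub_eq_zero]

end AdjoinRoot

open AdjoinRoot in
def IsPowCoeffs {R : Type*} [CommRing R] (p : R) (a b : ℕ → R) : Prop :=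
  ∀ n : ℕ, of (X ^ 2 - C p) (a (n + 1)) + of (X ^ 2 - C p) (b n) * root (X ^ 2 - C p) =
    (of (X ^ 2 - C p) (a 1) + of (X ^ 2 - C p) (b 0) * root (X ^ 2 - C p)) ^ (n + 1)

namespace IsPowCoeffs

open AdjoinRoot

variable {R : Type*} [CommRing R] [Nontrivial R] {p : R} {a b : ℕ → R}

theorem succ (h : IsPowCoeffs p a b) (n : ℕ) :
    a (n + 2) = a 1 * a (n + 1) + p * b 0 * b n ∧ b (n + 1) = b 0 * a (n + 1) + a 1 * b n := by
  apply of_add_of_mul_root_X_sq_sub_C_inj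
  rw [h (n + 1), pow_succ _ (n + 1), ← h n]
  simp only [map_add, map_mul]
  linear_combination (of (X ^ 2 - C p) (b n) * of (X ^ 2 - C p) (b 0)) *
    root_pow_eq_of_X_pow_sub_C 2 p

theorem b_one (h : IsPowCoeffs p a b) : b 1 = 2 * a 1 * b 0 := by
  rw [(h.succ 0).2]
  ring

theorem b_add_two (h : IsPowCoeffs p a b) (n : ℕ) :
    b (n + 2) = 2 * a 1 * b (n + 1) - (a 1 ^ 2 - b 0 ^ 2 * p) * b n := by
  obtain ⟨ha, hb⟩ := h.succ n
  rw [(h.succ (n + 1)).2, ha]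
  linear_combination -a 1 * hb

end IsPowCoeffs

namespace Polynomial.Chebyshev

theorem eq_mul_pow_mul_aeval_U_of_recurrence {R S : Type*} [CommRing R] [CommRing S]
    [Algebra R S] {f : ℕ → S} {x c q q' : S} (hq : q * q' = 1) (h0 : f 0 = c)
    (h1 : f 1 = 2 * x * c) (hrec : ∀ n, f (n + 2) = 2 * x * f (n + 1) - q ^ 2 * f n) (n : ℕ) :
    f n = c * q ^ n * aeval (x * q') (U R n) := by
  rw [aeval_U]
  induction n using Nat.twoStepInduction with
  | zero => simp [h0]
  | one =>
    simp only [Nat.cast_one, U_one, eval_mul, eval_ofNat, eval_X, h1]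
    linear_combination -2 * x * c * hq
  | more n ih0 ih1 =>
    rw [hrec, ih0, ih1]
    push_cast
    simp only [U_add_two, eval_sub, eval_mul, eval_ofNat, eval_X]
    linear_combination -2 * x * c * q ^ (n + 1) * eval (x * q') (U S (n + 1)) * hq

end Polynomial.Chebyshev

theorem chebyshev_second_kind_general (p : Polynomial ℂ) (a b : ℕ → Polynomial ℂ) (r : ℕ)
    (hdef : ∀ n : ℕ,
      AdjoinRoot.of ((X : Polynomial (Polynomial ℂ)) ^ 2 - C p) (a (n + 1)) +
        AdjoinRoot.of (X ^ 2 - C p) (b n) * AdjoinRoot.root (X ^ 2 - C p) =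
      (AdjoinRoot.of (X ^ 2 - C p) (a 1) +
        AdjoinRoot.of (X ^ 2 - C p) (b 0) * AdjoinRoot.root (X ^ 2 - C p)) ^ (n + 1))
    (hr : a 1 ^ 2 - b 0 ^ 2 * p = X ^ (2 * r)) :
    ∀ n : ℕ,
      Polynomial.toLaurent (b n) =
        Polynomial.toLaurent (b 0) * LaurentPolynomial.T ((r : ℤ) * n) *
          Polynomial.aeval
            (Polynomial.toLaurent (a 1) * LaurentPolynomial.T (-(r : ℤ)))
            (Polynomial.Chebyshev.U ℂ n) := by
  have hpow : IsPowCoeffs p a b := hdef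
  have hT : (LaurentPolynomial.T r : LaurentPolynomial ℂ) * LaurentPolynomial.T (-r) = 1 := by
    rw [← LaurentPolynomial.T_add, add_neg_cancel, LaurentPolynomial.T_zero]
  have h1 : toLaurent (b 1) = 2 * toLaurent (a 1) * toLaurent (b 0) := by
    rw [hpow.b_one, map_mul, map_mul, map_ofNat]
  have hrec (n : ℕ) : toLaurent (b (n + 2)) =
      2 * toLaurent (a 1) * toLaurent (b (n + 1)) - LaurentPolynomial.T r ^ 2 * toLaurent (b n) := by
    rw [hpow.b_add_two, hr, LaurentPolynomial.T_pow]
    simp only [map_sub, map_mul, map_ofNat, toLaurent_X_pow]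
    push_cast
    ring_nf
  intro n
  rw [mul_comm (r : ℤ), ← LaurentPolynomial.T_pow]
  exact Chebyshev.eq_mul_pow_mul_aeval_U_of_recurrence (f := fun n ↦ toLaurent (b n)) hT rfl h1
    hrec n

theorem chebyshev_second_kind (p : Polynomial ℂ) (a b : ℕ → Polynomial ℂ) (r : ℕ)
    (ha0 : a 0 = 1)
    (hdef : ∀ n : ℕ,
      AdjoinRoot.of ((X : Polynomial (Polynomial ℂ)) ^ 2 - C p) (a (n + 1)) +
        AdjoinRoot.of (X ^ 2 - C p) (b n) * AdjoinRoot.root (X ^ 2 - C p) =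
      (AdjoinRoot.of (X ^ 2 - C p) (a 1) +
        AdjoinRoot.of (X ^ 2 - C p) (b 0) * AdjoinRoot.root (X ^ 2 - C p)) ^ (n + 1))
    (hr : a 1 ^ 2 - b 0 ^ 2 * p = X ^ (2 * r)) :
    ∀ n : ℕ,
      Polynomial.toLaurent (b n) =
        Polynomial.toLaurent (b 0) * LaurentPolynomial.T ((r : ℤ) * n) *
          Polynomial.aeval
            (Polynomial.toLaurent (a 1) * LaurentPolynomial.T (-(r : ℤ)))
            (Polynomial.Chebyshev.U ℂ n) :=
  chebyshev_second_kind_general p a b r hdef hr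
end

section
/- (Binomial expansion form) Suppose a₁² − b₀²p = t^{2r}. Then for all n ≥ 0, aₙ = ∑_{k=0}^{⌊n/2⌋} C(n, 2k)·(a₁² − t^{2r})^k · a₁^{n−2k}, and bₙ = b₀·∑_{k=0}^{⌊n/2⌋} C(n+1, 2k+1)·(a₁² − t^{2r})^k · a₁^{n−2k}. -/
/-!
Write `α = a₁ + b₀√p` and `β = b₀√p`. Splitting the binomial expansion of `(a₁ + β)ⁿ` by the
parity of the power of `β`, and using `β² = b₀²p = a₁² - t^{2r}`, writes `αⁿ` as `A + B·√p` with
`A, B ∈ ℂ[t]` given by the claimed sums. Since `1, √p` is a basis of `ℂ[t][u]/(u² - p)` over `ℂ[t]`,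
these coefficients are `aₙ` and `bₙ₋₁`.
-/

open Polynomial Finset

theorem Finset.sum_range_succ_eq_sum_even_add_sum_odd {M : Type*} [AddCommMonoid M]
    (f : ℕ → M) (n : ℕ) :
    ∑ j ∈ range (n + 1), f j =
      ∑ k ∈ range (n / 2 + 1), f (2 * k) + ∑ k ∈ range ((n + 1) / 2), f (2 * k + 1) := by
  induction n using Nat.twoStepInduction with
  | zero => simp
  | one => simp [sum_range_succ]
  | more n ih _ =>
    rw [show (n + 2) / 2 + 1 = n / 2 + 1 + 1 by omega,
      show (n + 2 + 1) / 2 = (n + 1) / 2 + 1 by omega,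
      sum_range_succ (fun k ↦ f (2 * k)), sum_range_succ (fun k ↦ f (2 * k + 1)),
      sum_range_succ f (n + 2), sum_range_succ f (n + 1), ih]
    obtain ⟨m, rfl | rfl⟩ := Nat.even_or_odd' n
    · rw [show 2 * (2 * m / 2 + 1) = 2 * m + 2 by omega,
        show 2 * ((2 * m + 1) / 2) + 1 = 2 * m + 1 by omega]
      abel
    · rw [show 2 * ((2 * m + 1) / 2 + 1) = 2 * m + 1 + 1 by omega,
        show 2 * ((2 * m + 1 + 1) / 2) + 1 = 2 * m + 1 + 2 by omega]
      abel

theorem add_pow_eq_sum_even_add_mul_sum_odd {R : Type*} [CommSemiring R] (x β : R) (n : ℕ) :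
    (x + β) ^ n =
      ∑ k ∈ range (n / 2 + 1), (n.choose (2 * k) : R) * (β ^ 2) ^ k * x ^ (n - 2 * k) +
        β * ∑ k ∈ range ((n + 1) / 2),
          (n.choose (2 * k + 1) : R) * (β ^ 2) ^ k * x ^ (n - (2 * k + 1)) := by
  rw [add_comm, add_pow, sum_range_succ_eq_sum_even_add_sum_odd, mul_sum]
  congr 1 <;> refine sum_congr rfl fun k _ ↦ ?_ <;> ring

theorem AdjoinRoot.of_add_of_mul_root_inj {R : Type*} [CommRing R] {g : R[X]} (hg : g.Monic)
    (hdeg : 1 < g.natDegree) {x y x' y' : R}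
    (h : of g x + of g y * root g = of g x' + of g y' * root g) : x = x' ∧ y = y' := by
  nontriviality R
  have hlin : ∀ u v : R, of g u + of g v * root g = mk g (C u + C v * X) := fun u v ↦ by
    rw [map_add, map_mul, mk_C, mk_C, mk_X]
  have hred : ∀ u v : R, modByMonicHom hg (of g u + of g v * root g) = C u + C v * X :=
    fun u v ↦ by
      rw [hlin, modByMonicHom_mk, (modByMonic_eq_self_iff hg).mpr]
      rw [degree_eq_natDegree hg.ne_zero, add_comm]
      exact degree_linear_le.trans_lt (WithBot.coe_lt_coe.mpr hdeg)
  have hpoly := congrArg (modByMonicHom hg) h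
  rw [hred, hred] at hpoly
  exact ⟨by simpa using congrArg (coeff · 0) hpoly, by simpa using congrArg (coeff · 1) hpoly⟩

theorem AdjoinRoot.root_X_sq_sub_C_sq {R : Type*} [CommRing R] (c : R) :
    root (X ^ 2 - C c) ^ 2 = of (X ^ 2 - C c) c := by
  rw [← sub_eq_zero, ← eval₂_root (X ^ 2 - C c), eval₂_sub, eval₂_C, eval₂_pow, eval₂_X]

theorem AdjoinRoot.of_add_of_mul_root_X_sq_sub_C_pow_succ {R : Type*} [CommRing R]
    (c x y : R) (n : ℕ) :
    (of (X ^ 2 - C c) x + of (X ^ 2 - C c) y * root (X ^ 2 - C c)) ^ (n + 1) =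
      of (X ^ 2 - C c) (∑ k ∈ range ((n + 1) / 2 + 1),
          ((n + 1).choose (2 * k) : R) * (y ^ 2 * c) ^ k * x ^ (n + 1 - 2 * k)) +
        of (X ^ 2 - C c) (y * ∑ k ∈ range (n / 2 + 1),
          ((n + 1).choose (2 * k + 1) : R) * (y ^ 2 * c) ^ k * x ^ (n - 2 * k)) *
          root (X ^ 2 - C c) := by
  have hsq : (of (X ^ 2 - C c) y * root (X ^ 2 - C c)) ^ 2 = of (X ^ 2 - C c) (y ^ 2 * c) := by
    rw [mul_pow, root_X_sq_sub_C_sq, map_mul, map_pow]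
  rw [add_pow_eq_sum_even_add_mul_sum_odd, hsq, show (n + 1 + 1) / 2 = n / 2 + 1 by omega,
    map_mul, mul_right_comm]
  simp only [Nat.add_sub_add_right, map_sum, map_mul, map_pow, map_natCast]

theorem binomial_expansion (p : Polynomial ℂ) (a b : ℕ → Polynomial ℂ) (r : ℕ)
    (ha0 : a 0 = 1)
    (hdef : ∀ n : ℕ,
      AdjoinRoot.of ((X : Polynomial (Polynomial ℂ)) ^ 2 - C p) (a (n + 1)) +
        AdjoinRoot.of (X ^ 2 - C p) (b n) * AdjoinRoot.root (X ^ 2 - C p) =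
      (AdjoinRoot.of (X ^ 2 - C p) (a 1) +
        AdjoinRoot.of (X ^ 2 - C p) (b 0) * AdjoinRoot.root (X ^ 2 - C p)) ^ (n + 1))
    (hr : a 1 ^ 2 - b 0 ^ 2 * p = X ^ (2 * r)) :
    ∀ n : ℕ,
      a n = ∑ k ∈ Finset.range (n / 2 + 1),
          (n.choose (2 * k) : Polynomial ℂ) * (a 1 ^ 2 - X ^ (2 * r)) ^ k * a 1 ^ (n - 2 * k) ∧
      b n = b 0 * ∑ k ∈ Finset.range (n / 2 + 1),
          ((n + 1).choose (2 * k + 1) : Polynomial ℂ) * (a 1 ^ 2 - X ^ (2 * r)) ^ k *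
            a 1 ^ (n - 2 * k) := by
  have hdiscr : b 0 ^ 2 * p = a 1 ^ 2 - X ^ (2 * r) := by rw [← hr, sub_sub_cancel]
  have hcoeff (n : ℕ) := AdjoinRoot.of_add_of_mul_root_inj (monic_X_pow_sub_C p two_ne_zero)
    (by rw [natDegree_X_pow_sub_C]; norm_num)
    ((hdef n).trans (AdjoinRoot.of_add_of_mul_root_X_sq_sub_C_pow_succ p (a 1) (b 0) n))
  simp only [hdiscr] at hcoeff
  rintro (_ | n)
  · simp [ha0]
  · exact ⟨(hcoeff n).1, (hcoeff (n + 1)).2⟩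
end

section
/- (Determinant formula) Suppose a₁² − b₀²p = t^{2r}. For n ≥ 1, aₙ equals the determinant of the n×n tridiagonal matrix with diagonal entries (a₁, 2a₁, 2a₁, …, 2a₁) and all sub- and super-diagonal entries equal to t^r; and bₙ equals b₀ times the determinant of the n×n tridiagonal matrix with all diagonal entries 2a₁ and all sub- and super-diagonal entries t^r. -/
open Polynomial

noncomputable def tri (x : Polynomial ℂ) (f : ℕ → Polynomial ℂ) (n : ℕ) :
    Matrix (Fin n) (Fin n) (Polynomial ℂ) :=
  Matrix.of fun i j => if (i : ℕ) = (j : ℕ) then f i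
    else if (i : ℕ) + 1 = (j : ℕ) ∨ (j : ℕ) + 1 = (i : ℕ) then x else 0

lemma tri_det_rec (x : Polynomial ℂ) (f : ℕ → Polynomial ℂ) (n : ℕ) :
    (tri x f (n+2)).det =
      f 0 * (tri x (fun k => f (k+1)) (n+1)).det
        - x^2 * (tri x (fun k => f (k+2)) n).det := by
  rw [Matrix.det_succ_row_zero, Fin.sum_univ_succ, Fin.sum_univ_succ]
  have h0 : (tri x f (n+2)) 0 0 = f 0 := by simp [tri]
  have h1 : (tri x f (n+2)) 0 ((0 : Fin (n+1)).succ) = x := by simp [tri]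
  have htail : ∀ j : Fin n, (tri x f (n+2)) 0 (j.succ.succ) = 0 := by
    intro j; simp [tri]
  have hsub0 : (tri x f (n+2)).submatrix Fin.succ ((0 : Fin (n+2)).succAbove)
      = tri x (fun k => f (k+1)) (n+1) := by
    rw [Fin.succAbove_zero]
    ext i j
    simp only [Matrix.submatrix_apply, tri, Matrix.of_apply, Fin.val_succ]
    split_ifs <;> first | rfl | omega
  set N := (tri x f (n+2)).submatrix Fin.succ (((0:Fin (n+1)).succ : Fin (n+2)).succAbove) with hN
  have hNdet : N.det = x * (tri x (fun k => f (k+2)) n).det := by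
    rw [Matrix.det_succ_column_zero, Fin.sum_univ_succ]
    have hN00 : N 0 0 = x := by
      simp [hN, tri, Fin.succAbove, Fin.lt_iff_val_lt_val]
    have hNtail : ∀ i : Fin n, N i.succ 0 = 0 := by
      intro i
      simp [hN, tri, Fin.succAbove, Fin.lt_iff_val_lt_val]
    have hNsub : N.submatrix ((0 : Fin (n+1)).succAbove) Fin.succ
        = tri x (fun k => f (k+2)) n := by
      rw [Fin.succAbove_zero]
      ext i j
      have hsa : ((((0:Fin (n+1)).succ : Fin (n+2)).succAbove) j.succ : ℕ) = (j : ℕ) + 2 := by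
        simp [Fin.succAbove, Fin.lt_iff_val_lt_val]
      simp only [Matrix.submatrix_apply, hN, tri, Matrix.of_apply, Fin.val_succ, hsa]
      split_ifs <;> first | rfl | omega
    rw [hNsub, hN00]
    simp only [hNtail]
    simp
  rw [h0, h1, hsub0, hNdet]
  simp only [htail]
  simp
  ring

lemma pair_eq (p A B A' B' : Polynomial ℂ)
    (h : AdjoinRoot.of ((X : Polynomial (Polynomial ℂ))^2 - C p) A
        + AdjoinRoot.of (X^2 - C p) B * AdjoinRoot.root (X^2 - C p)
      = AdjoinRoot.of (X^2 - C p) A' + AdjoinRoot.of (X^2 - C p) B' * AdjoinRoot.root (X^2 - C p)) :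
    A = A' ∧ B = B' := by
  have h' : AdjoinRoot.mk ((X : Polynomial (Polynomial ℂ))^2 - C p) (C A + C B * X)
      = AdjoinRoot.mk (X^2 - C p) (C A' + C B' * X) := by
    simpa [map_add, map_mul, AdjoinRoot.mk_C, AdjoinRoot.mk_X] using h
  have hdvd := AdjoinRoot.mk_eq_mk.mp h'
  have hq : (C A + C B * X) - (C A' + C B' * X) = C (A - A') + C (B - B') * X := by
    simp [map_sub]; ring
  rw [hq] at hdvd
  have hz : C (A - A') + C (B - B') * X = 0 := by
    refine eq_zero_of_dvd_of_degree_lt hdvd ?_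
    rw [Polynomial.degree_X_pow_sub_C (by norm_num) p]
    have : (C (A - A') + C (B - B') * X).degree ≤ 1 := by compute_degree
    exact lt_of_le_of_lt this (by norm_num)
  constructor
  · have := congrArg (fun q => Polynomial.coeff q 0) hz
    simpa [sub_eq_zero] using this
  · have := congrArg (fun q => Polynomial.coeff q 1) hz
    simpa [sub_eq_zero] using this

lemma root_sq (p : Polynomial ℂ) :
    (AdjoinRoot.root ((X : Polynomial (Polynomial ℂ))^2 - C p))^2
      = AdjoinRoot.of (X^2 - C p) p := by
  have := AdjoinRoot.mk_self (f := (X : Polynomial (Polynomial ℂ))^2 - C p)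
  have h2 : (AdjoinRoot.mk ((X : Polynomial (Polynomial ℂ))^2 - C p)) (X^2 - C p)
      = (AdjoinRoot.root (X^2 - C p))^2 - AdjoinRoot.of (X^2 - C p) p := by
    simp [map_sub, map_pow, AdjoinRoot.mk_X, AdjoinRoot.mk_C]
  rw [h2] at this
  linear_combination (norm := ring_nf) this

theorem determinant_formula (p : Polynomial ℂ) (a b : ℕ → Polynomial ℂ) (r : ℕ)
    (ha0 : a 0 = 1)
    (hdef : ∀ n : ℕ,
      AdjoinRoot.of ((X : Polynomial (Polynomial ℂ)) ^ 2 - C p) (a (n + 1)) +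
        AdjoinRoot.of (X ^ 2 - C p) (b n) * AdjoinRoot.root (X ^ 2 - C p) =
      (AdjoinRoot.of (X ^ 2 - C p) (a 1) +
        AdjoinRoot.of (X ^ 2 - C p) (b 0) * AdjoinRoot.root (X ^ 2 - C p)) ^ (n + 1))
    (hr : a 1 ^ 2 - b 0 ^ 2 * p = X ^ (2 * r)) :
    ∀ n : ℕ, 1 ≤ n →
      a n = Matrix.det (Matrix.of fun i j : Fin n =>
          if (i : ℕ) = (j : ℕ) then (if (i : ℕ) = 0 then a 1 else 2 * a 1)
          else if (i : ℕ) + 1 = (j : ℕ) ∨ (j : ℕ) + 1 = (i : ℕ) then X ^ r else 0) ∧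
      b n = b 0 * Matrix.det (Matrix.of fun i j : Fin n =>
          if (i : ℕ) = (j : ℕ) then 2 * a 1
          else if (i : ℕ) + 1 = (j : ℕ) ∨ (j : ℕ) + 1 = (i : ℕ) then X ^ r else 0) := by
  -- multiplication rule in the quadratic extension
  have hmul : ∀ A B : Polynomial ℂ,
      (AdjoinRoot.of ((X : Polynomial (Polynomial ℂ)) ^ 2 - C p) (a 1) +
        AdjoinRoot.of (X ^ 2 - C p) (b 0) * AdjoinRoot.root (X ^ 2 - C p)) *
      (AdjoinRoot.of (X ^ 2 - C p) A + AdjoinRoot.of (X ^ 2 - C p) B * AdjoinRoot.root (X ^ 2 - C p))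
      = AdjoinRoot.of (X ^ 2 - C p) (a 1 * A + p * b 0 * B) +
        AdjoinRoot.of (X ^ 2 - C p) (a 1 * B + b 0 * A) * AdjoinRoot.root (X ^ 2 - C p) := by
    intro A B
    simp only [map_add, map_mul]
    linear_combination (AdjoinRoot.of ((X : Polynomial (Polynomial ℂ)) ^ 2 - C p) (b 0) *
      AdjoinRoot.of (X ^ 2 - C p) B) * root_sq p
  -- the pair recurrence
  have key : ∀ n : ℕ, a (n+2) = a 1 * a (n+1) + p * b 0 * b n ∧
      b (n+1) = a 1 * b n + b 0 * a (n+1) := by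
    intro n
    have h := hdef (n+1)
    rw [pow_succ'
      ((AdjoinRoot.of ((X : Polynomial (Polynomial ℂ)) ^ 2 - C p)) (a 1) +
        (AdjoinRoot.of (X ^ 2 - C p)) (b 0) * AdjoinRoot.root (X ^ 2 - C p)) (n+1),
      ← hdef n, hmul] at h
    exact pair_eq p _ _ _ _ h
  -- determinant sequences
  set fE : ℕ → Polynomial ℂ := fun m => if m = 0 then a 1 else 2 * a 1 with hfE
  set fD : ℕ → Polynomial ℂ := fun _ => 2 * a 1 with hfD
  set D : ℕ → Polynomial ℂ := fun n => (tri (X^r) fD n).det with hDdef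
  set E : ℕ → Polynomial ℂ := fun n => (tri (X^r) fE n).det with hEdef
  have hshift1 : (fun k => fE (k+1)) = fD := by funext k; simp [hfE, hfD]
  have hshift2 : (fun k => fE (k+2)) = fD := by funext k; simp [hfE, hfD]
  have hD : ∀ n, D (n+2) = 2 * a 1 * D (n+1) - (X^r)^2 * D n := by
    intro n
    have := tri_det_rec (X^r) fD n
    simpa [hDdef, hfD] using this
  have hE : ∀ n, E (n+2) = a 1 * D (n+1) - (X^r)^2 * D n := by
    intro n
    have := tri_det_rec (X^r) fE n
    rw [hshift1, hshift2] at this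
    simpa [hEdef, hDdef, hfE] using this
  have hD0 : D 0 = 1 := by simp [hDdef, tri]
  have hD1 : D 1 = 2 * a 1 := by
    simp [hDdef, tri, Matrix.det_fin_one, hfD]
  have hE1 : E 1 = a 1 := by
    simp [hEdef, tri, Matrix.det_fin_one, hfE]
  have hx2 : (X^r : Polynomial ℂ)^2 = a 1 ^ 2 - b 0 ^ 2 * p := by
    rw [← pow_mul, mul_comm r 2, hr]
  -- main simultaneous induction
  have key2 : ∀ n : ℕ, a (n+1) = E (n+1) ∧ b n = b 0 * D n := by
    intro n
    induction n with
    | zero => exact ⟨by rw [hE1], by rw [hD0, mul_one]⟩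
    | succ m ih =>
      obtain ⟨ihA, ihB⟩ := ih
      obtain ⟨hA, hB⟩ := key m
      constructor
      · rw [hA, ihA, ihB, hE m]
        cases m with
        | zero => rw [hE1, hD0, hD1, hx2]; ring
        | succ k =>
          rw [hE k, hD k, hx2]; ring
      · rw [hB, ihA, ihB]
        cases m with
        | zero => rw [hE1, hD0, hD1]; ring
        | succ k =>
          rw [hE k, hD k]; ring
  intro n hn
  obtain ⟨m, rfl⟩ : ∃ m, n = m + 1 := ⟨n - 1, by omega⟩
  exact ⟨(key2 m).1, (key2 (m+1)).2⟩
end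

section
/- (DJKM Pell identity) Let β ∈ ℂ with β ≠ ±1, p(t) = (t⁴ − 2βt² + 1)/(β² − 1), a₁ = (t² − 1)/√(2(β−1)) and b₀ = √((β+1)/2). Then a₁² − b₀²·p = t², and consequently the sequences defined by aₙ + bₙ₋₁√p = (a₁ + b₀√p)ⁿ satisfy aₙ² − bₙ₋₁²·p = t^{2n} for all n ≥ 0. -/
open Polynomial

/-!
In `R[√d] = R[Y]/(Y² - d)` the conjugation `√d ↦ -√d` is a ring automorphism and
`(u + v√d)(u - v√d) = u² - v²d`, so the norm `u² - v²d` is multiplicative and the Pell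
identity for `(a₁ + b₀√p)ⁿ` reduces to the case `n = 1`. That case is the polynomial identity
`(t² - 1)² / (2(β - 1)) - (β + 1)/2 · (t⁴ - 2βt² + 1)/(β² - 1) = t²`.
-/

namespace AdjoinRoot

variable {R : Type*} [CommRing R] (d : R)

theorem root_X_sq_sub_C_sq_s16 : root (X ^ 2 - C d) ^ 2 = of (X ^ 2 - C d) d := by
  have h := eval₂_root (X ^ 2 - C d)
  simp only [eval₂_sub, eval₂_pow, eval₂_X, eval₂_C] at h
  exact sub_eq_zero.mp h

theorem aeval_neg_root_X_sq_sub_C :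
    aeval (-root (X ^ 2 - C d)) (X ^ 2 - C d) = 0 := by
  simp [algebraMap_eq, root_X_sq_sub_C_sq_s16]

noncomputable def sqrtConj : AdjoinRoot (X ^ 2 - C d) →ₐ[R] AdjoinRoot (X ^ 2 - C d) :=
  liftAlgHom _ (Algebra.ofId _ _) _ (aeval_neg_root_X_sq_sub_C d)

@[simp]
theorem sqrtConj_root : sqrtConj d (root (X ^ 2 - C d)) = -root (X ^ 2 - C d) :=
  liftAlgHom_root _ _ _ _

@[simp]
theorem sqrtConj_of (r : R) : sqrtConj d (of (X ^ 2 - C d) r) = of (X ^ 2 - C d) r :=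
  liftAlgHom_of _ _ _ _ r

theorem mul_sqrtConj (u v : R) :
    (of (X ^ 2 - C d) u + of (X ^ 2 - C d) v * root (X ^ 2 - C d)) *
        sqrtConj d (of (X ^ 2 - C d) u + of (X ^ 2 - C d) v * root (X ^ 2 - C d)) =
      of (X ^ 2 - C d) (u ^ 2 - v ^ 2 * d) := by
  simp only [map_add, map_mul, sqrtConj_of, sqrtConj_root, map_sub, map_pow,
    ← root_X_sq_sub_C_sq_s16]
  ring

theorem sq_sub_sq_mul_eq_pow [IsDomain R] {u v u' v' : R} (n : ℕ)
    (h : of (X ^ 2 - C d) u' + of (X ^ 2 - C d) v' * root (X ^ 2 - C d) =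
      (of (X ^ 2 - C d) u + of (X ^ 2 - C d) v * root (X ^ 2 - C d)) ^ n) :
    u' ^ 2 - v' ^ 2 * d = (u ^ 2 - v ^ 2 * d) ^ n := by
  apply of.injective_of_degree_ne_zero (f := X ^ 2 - C d)
    (by rw [degree_X_pow_sub_C two_pos]; norm_num)
  rw [← mul_sqrtConj, map_pow, ← mul_sqrtConj, h, map_pow, mul_pow]

end AdjoinRoot

theorem djkm_base_sq_sub_sq_mul {β s c : ℂ} (hβ1 : β ≠ 1) (hβ2 : β ≠ -1)
    (hs : s ^ 2 = 2 * (β - 1)) (hc : c ^ 2 = (β + 1) / 2) :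
    (C s⁻¹ * (X ^ 2 - 1)) ^ 2 - C c ^ 2 * (C ((β ^ 2 - 1)⁻¹) * (X ^ 4 - C (2 * β) * X ^ 2 + 1)) =
      (X ^ 2 : ℂ[X]) := by
  have hsub : β - 1 ≠ 0 := sub_ne_zero.mpr hβ1
  have hadd : β + 1 ≠ 0 := by rwa [← sub_neg_eq_add, sub_ne_zero]
  have hsq : β ^ 2 - 1 = (β - 1) * (β + 1) := by ring
  apply Polynomial.funext
  intro x
  simp only [eval_mul, eval_pow, eval_sub, eval_add, eval_C, eval_X, eval_one, mul_pow, inv_pow,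
    hs, hc, hsq]
  field_simp
  ring

theorem djkm_pell_general (β s c : ℂ) (hβ1 : β ≠ 1) (hβ2 : β ≠ -1)
    (hs : s ^ 2 = 2 * (β - 1)) (hc : c ^ 2 = (β + 1) / 2)
    (p : Polynomial ℂ)
    (hp : p = C ((β ^ 2 - 1)⁻¹) * (X ^ 4 - C (2 * β) * X ^ 2 + 1))
    (a b : ℕ → Polynomial ℂ)
    (ha1 : a 1 = C s⁻¹ * (X ^ 2 - 1))
    (hb0 : b 0 = C c)
    (hdef : ∀ n : ℕ,
      AdjoinRoot.of ((X : Polynomial (Polynomial ℂ)) ^ 2 - C p) (a (n + 1)) +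
        AdjoinRoot.of (X ^ 2 - C p) (b n) * AdjoinRoot.root (X ^ 2 - C p) =
      (AdjoinRoot.of (X ^ 2 - C p) (a 1) +
        AdjoinRoot.of (X ^ 2 - C p) (b 0) * AdjoinRoot.root (X ^ 2 - C p)) ^ (n + 1)) :
    a 1 ^ 2 - b 0 ^ 2 * p = X ^ 2 ∧
      ∀ n : ℕ, a (n + 1) ^ 2 - b n ^ 2 * p = X ^ (2 * (n + 1)) := by
  have base : a 1 ^ 2 - b 0 ^ 2 * p = X ^ 2 := by
    rw [ha1, hb0, hp]
    exact djkm_base_sq_sub_sq_mul hβ1 hβ2 hs hc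
  refine ⟨base, fun n => ?_⟩
  rw [AdjoinRoot.sq_sub_sq_mul_eq_pow p (n + 1) (hdef n), base, pow_mul]

/-- DJKM Pell identity: `a₁² − b₀²p = t²` and hence `aₙ² − bₙ₋₁²p = t²ⁿ`. -/
theorem djkm_pell (β s c : ℂ) (hβ1 : β ≠ 1) (hβ2 : β ≠ -1)
    (hs : s ^ 2 = 2 * (β - 1)) (hc : c ^ 2 = (β + 1) / 2)
    (p : Polynomial ℂ)
    (hp : p = C ((β ^ 2 - 1)⁻¹) * (X ^ 4 - C (2 * β) * X ^ 2 + 1))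
    (a b : ℕ → Polynomial ℂ)
    (ha1 : a 1 = C s⁻¹ * (X ^ 2 - 1))
    (hb0 : b 0 = C c)
    (ha0 : a 0 = 1)
    (hdef : ∀ n : ℕ,
      AdjoinRoot.of ((X : Polynomial (Polynomial ℂ)) ^ 2 - C p) (a (n + 1)) +
        AdjoinRoot.of (X ^ 2 - C p) (b n) * AdjoinRoot.root (X ^ 2 - C p) =
      (AdjoinRoot.of (X ^ 2 - C p) (a 1) +
        AdjoinRoot.of (X ^ 2 - C p) (b 0) * AdjoinRoot.root (X ^ 2 - C p)) ^ (n + 1)) :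
    a 1 ^ 2 - b 0 ^ 2 * p = X ^ 2 ∧
      ∀ n : ℕ, a (n + 1) ^ 2 - b n ^ 2 * p = X ^ (2 * (n + 1)) :=
  djkm_pell_general β s c hβ1 hβ2 hs hc p hp a b ha1 hb0 hdef
end

section
/- (Orthogonality of first-kind family) Let β > 1 be real, p(t) = (t⁴ − 2βt² + 1)/(β² − 1), a₁(t) = (t² − 1)/√(2(β−1)), b₀ = √((β+1)/2), and let aₙ be defined by aₙ + bₙ₋₁√p = (a₁ + b₀√p)ⁿ. Then ∫ from t = (√(β+1) − √(β−1))/√2 to (√(β+1) + √(β−1))/√2 of t^{−n−m−1}·aₙ(t)·aₘ(t)·(t²+1)·√((1−β)/(t⁴ − 2βt² + 1)) dt equals 0 if n ≠ m, π√(β−1) if n = m = 0, and (π/2)√(β−1) if n = m ≠ 0. -/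
/-!
On the curve `t - t⁻¹ = √(2(β-1)) cos θ`, `0 < θ < π`, one has
`p(t) = -2 t² sin² θ / (β+1)`, so `√p` is imaginary there and `a₁ + b₀√p = t e^{iθ}`;
hence `aₙ(t) = tⁿ cos nθ`. The substitution `t ↦ θ` maps the interval of integration onto
`(0, π)` and turns the integrand into `√(β-1) cos nθ cos mθ`, so the claim reduces to the
orthogonality of cosines on `[0, π]`.
-/

open Polynomial intervalIntegral Set MeasureTheory Real

theorem AdjoinRoot.map_add_mul_sqrt_pow {R S : Type*} [CommRing R] [CommRing S] {p : R}
    {a b : ℕ → R}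
    (hdef : ∀ n : ℕ,
      AdjoinRoot.of ((X : R[X]) ^ 2 - C p) (a (n + 1)) +
        AdjoinRoot.of (X ^ 2 - C p) (b n) * AdjoinRoot.root (X ^ 2 - C p) =
      (AdjoinRoot.of (X ^ 2 - C p) (a 1) +
        AdjoinRoot.of (X ^ 2 - C p) (b 0) * AdjoinRoot.root (X ^ 2 - C p)) ^ (n + 1))
    (i : R →+* S) {s : S} (hs : s ^ 2 = i p) (n : ℕ) :
    i (a (n + 1)) + i (b n) * s = (i (a 1) + i (b 0) * s) ^ (n + 1) := by
  have hroot : ((X : R[X]) ^ 2 - C p).eval₂ i s = 0 := by simp [hs]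
  simpa using congrArg (AdjoinRoot.lift i s hroot) (hdef n)

lemma integral_cos_int_mul (k : ℤ) :
    ∫ θ in 0..π, cos (k * θ) = if k = 0 then π else 0 := by
  split_ifs with hk
  · simp [hk]
  · have hk' : (k : ℝ) ≠ 0 := Int.cast_ne_zero.2 hk
    rw [integral_comp_mul_left (fun x => cos x) hk', integral_cos, sin_int_mul_pi, mul_zero,
      sin_zero, sub_zero, smul_zero]

theorem integral_cos_nat_mul_mul_cos_nat_mul (n m : ℕ) :
    ∫ θ in 0..π, cos (n * θ) * cos (m * θ) =
      if n = m then (if n = 0 then π else π / 2) else 0 := by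
  have hprod : ∀ θ, cos (n * θ) * cos (m * θ) =
      (cos (((n - m : ℤ) : ℝ) * θ) + cos (((n + m : ℤ) : ℝ) * θ)) / 2 := fun θ => by
    push_cast
    rw [sub_mul, add_mul, ← two_mul_cos_mul_cos]
    ring
  simp_rw [hprod]
  rw [intervalIntegral.integral_div, intervalIntegral.integral_add
      (Continuous.intervalIntegrable (by fun_prop) _ _)
      (Continuous.intervalIntegrable (by fun_prop) _ _),
    integral_cos_int_mul, integral_cos_int_mul]
  split_ifs <;> first | omega | ring

/-- The positive root of `t - t⁻¹ = c`, since `sinh (log t) = (t - t⁻¹) / 2`. -/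
noncomputable def posRootSubInv (c : ℝ) : ℝ := exp (arsinh (c / 2))

lemma posRootSubInv_pos (c : ℝ) : 0 < posRootSubInv c := exp_pos _

lemma posRootSubInv_eq_iff {c t : ℝ} (ht : 0 < t) : posRootSubInv c = t ↔ t - t⁻¹ = c := by
  have hlog : exp (arsinh (c / 2)) = t ↔ arsinh (c / 2) = log t :=
    ⟨fun h => by rw [← h, log_exp], fun h => by rw [h, exp_log ht]⟩
  have hsinh : arsinh (c / 2) = log t ↔ c / 2 = sinh (log t) :=
    ⟨fun h => by rw [← h, sinh_arsinh], fun h => by rw [h, arsinh_sinh]⟩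
  rw [posRootSubInv, hlog, hsinh, sinh_log ht]
  constructor <;> intro h <;> linarith

lemma posRootSubInv_sub_inv (c : ℝ) : posRootSubInv c - (posRootSubInv c)⁻¹ = c :=
  (posRootSubInv_eq_iff (posRootSubInv_pos c)).1 rfl

lemma strictMono_posRootSubInv : StrictMono posRootSubInv :=
  exp_strictMono.comp (arsinh_strictMono.comp fun _ _ h => by linarith)

@[fun_prop]
lemma continuous_posRootSubInv : Continuous posRootSubInv :=
  continuous_exp.comp (continuous_arsinh.comp (continuous_id.div_const 2))

lemma hasDerivAt_posRootSubInv (c : ℝ) :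
    HasDerivAt posRootSubInv (posRootSubInv c ^ 2 / (posRootSubInv c ^ 2 + 1)) c := by
  set t := posRootSubInv c
  have ht := posRootSubInv_pos c
  have hcosh : √(1 + (c / 2) ^ 2) = (t + t⁻¹) / 2 := by
    rw [← cosh_arsinh, ← cosh_log ht, posRootSubInv, log_exp]
  have h := ((hasDerivAt_arsinh (c / 2)).comp c ((hasDerivAt_id c).div_const 2)).exp
  rw [hcosh] at h
  refine h.congr_deriv ?_
  change t * (((t + t⁻¹) / 2)⁻¹ * (1 / 2)) = t ^ 2 / (t ^ 2 + 1)
  field_simp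

lemma posRootSubInv_sub_of_mul_eq_one {u v : ℝ} (hv : 0 < v) (huv : u * v = 1) :
    posRootSubInv (v - u) = v :=
  (posRootSubInv_eq_iff hv).2 (by rw [eq_inv_of_mul_eq_one_left huv])

section Curve

variable {K : ℝ}

lemma strictAntiOn_posRootSubInv_mul_cos (hK : 0 < K) :
    StrictAntiOn (fun θ => posRootSubInv (K * cos θ)) (Icc 0 π) :=
  strictMono_posRootSubInv.comp_strictAntiOn fun _ hx _ hy hxy =>
    mul_lt_mul_of_pos_left (strictAntiOn_cos hx hy hxy) hK

lemma image_posRootSubInv_mul_cos (hK : 0 < K) :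
    (fun θ => posRootSubInv (K * cos θ)) '' Ioo 0 π =
      Ioo (posRootSubInv (-K)) (posRootSubInv K) := by
  rw [ContinuousOn.image_Ioo_of_strictAntiOn pi_pos.le (by fun_prop)
    (strictAntiOn_posRootSubInv_mul_cos hK), cos_zero, cos_pi, mul_one, mul_neg_one]

lemma hasDerivAt_posRootSubInv_mul_cos (θ : ℝ) :
    HasDerivAt (fun θ => posRootSubInv (K * cos θ))
      (-(K * sin θ * posRootSubInv (K * cos θ) ^ 2 / (posRootSubInv (K * cos θ) ^ 2 + 1))) θ :=
  ((hasDerivAt_posRootSubInv _).comp θ ((hasDerivAt_cos θ).const_mul K)).congr_deriv (by ring)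

/-- No integrability hypothesis is needed: the two integrands are integrable or not
simultaneously (and in the latter case both integrals are `0`). -/
theorem integral_posRootSubInv_mul_cos (hK : 0 < K) {g G : ℝ → ℝ}
    (hG : ∀ θ ∈ Ioo 0 π, K * sin θ * posRootSubInv (K * cos θ) ^ 2 /
      (posRootSubInv (K * cos θ) ^ 2 + 1) * g (posRootSubInv (K * cos θ)) = G θ) :
    ∫ t in posRootSubInv (-K)..posRootSubInv K, g t = ∫ θ in 0..π, G θ := by
  have hle : posRootSubInv (-K) ≤ posRootSubInv K :=
    strictMono_posRootSubInv.monotone (by linarith)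
  rw [integral_of_le hle, integral_of_le pi_pos.le, integral_Ioc_eq_integral_Ioo,
    integral_Ioc_eq_integral_Ioo, ← image_posRootSubInv_mul_cos hK,
    integral_image_eq_integral_abs_deriv_smul measurableSet_Ioo
      (fun θ _ => (hasDerivAt_posRootSubInv_mul_cos θ).hasDerivWithinAt)
      ((strictAntiOn_posRootSubInv_mul_cos hK).injOn.mono Ioo_subset_Icc_self)]
  refine setIntegral_congr_fun measurableSet_Ioo fun θ hθ => ?_
  have hsin : 0 < sin θ := sin_pos_of_pos_of_lt_pi hθ.1 hθ.2
  rw [← hG θ hθ, abs_neg, abs_of_nonneg (by positivity), smul_eq_mul]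

end Curve

lemma quartic_posRootSubInv_mul_cos {β K : ℝ} (hK : K ^ 2 = 2 * (β - 1)) (θ : ℝ) :
    posRootSubInv (K * cos θ) ^ 4 - 2 * β * posRootSubInv (K * cos θ) ^ 2 + 1 =
      -(K * posRootSubInv (K * cos θ) * sin θ) ^ 2 := by
  set t := posRootSubInv (K * cos θ)
  have ht : t ≠ 0 := (posRootSubInv_pos _).ne'
  have hsub : t - t⁻¹ = K * cos θ := posRootSubInv_sub_inv _
  have hquartic : t ^ 4 - 2 * β * t ^ 2 + 1 = t ^ 2 * ((t - t⁻¹) ^ 2 - 2 * (β - 1)) := by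
    field_simp
    ring
  rw [hquartic, hsub, ← hK]
  linear_combination (K * t) ^ 2 * sin_sq_add_cos_sq θ

lemma eval_posRootSubInv_mul_cos_eq_neg_sq {β : ℝ} (hβ : 1 < β) {p : ℝ[X]}
    (hp : p = C ((β ^ 2 - 1)⁻¹) * (X ^ 4 - C (2 * β) * X ^ 2 + 1)) (θ : ℝ) :
    p.eval (posRootSubInv (√(2 * (β - 1)) * cos θ)) =
      -(posRootSubInv (√(2 * (β - 1)) * cos θ) * sin θ / √((β + 1) / 2)) ^ 2 := by
  have hK2 : √(2 * (β - 1)) ^ 2 = 2 * (β - 1) := sq_sqrt (by linarith)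
  have hr2 : √((β + 1) / 2) ^ 2 = (β + 1) / 2 := sq_sqrt (by linarith)
  have hβ2 : β ^ 2 - 1 ≠ 0 := by nlinarith
  rw [hp]
  simp only [eval_mul, eval_C, eval_add, eval_sub, eval_pow, eval_X, eval_one]
  rw [quartic_posRootSubInv_mul_cos hK2 θ]
  field_simp
  rw [hK2, hr2]
  ring

theorem eval_posRootSubInv_mul_cos_eq_pow_mul_cos {β : ℝ} (hβ : 1 < β) {p : ℝ[X]}
    (hp : p = C ((β ^ 2 - 1)⁻¹) * (X ^ 4 - C (2 * β) * X ^ 2 + 1))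
    {a b : ℕ → ℝ[X]}
    (ha1 : a 1 = C (√(2 * (β - 1)))⁻¹ * (X ^ 2 - 1))
    (hb0 : b 0 = C (√((β + 1) / 2)))
    (ha0 : a 0 = 1)
    (hdef : ∀ n : ℕ,
      AdjoinRoot.of ((X : ℝ[X][X]) ^ 2 - C p) (a (n + 1)) +
        AdjoinRoot.of (X ^ 2 - C p) (b n) * AdjoinRoot.root (X ^ 2 - C p) =
      (AdjoinRoot.of (X ^ 2 - C p) (a 1) +
        AdjoinRoot.of (X ^ 2 - C p) (b 0) * AdjoinRoot.root (X ^ 2 - C p)) ^ (n + 1))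
    (n : ℕ) (θ : ℝ) :
    (a n).eval (posRootSubInv (√(2 * (β - 1)) * cos θ)) =
      posRootSubInv (√(2 * (β - 1)) * cos θ) ^ n * cos (n * θ) := by
  rcases n with _ | n
  · simp [ha0]
  set K := √(2 * (β - 1))
  set t := posRootSubInv (K * cos θ)
  set r := √((β + 1) / 2)
  have hK : 0 < K := sqrt_pos.2 (by linarith)
  have hr : 0 < r := sqrt_pos.2 (by linarith)
  have ha1t : (a 1).eval t = t * cos θ := by
    have hsub : t - t⁻¹ = K * cos θ := posRootSubInv_sub_inv _
    have ht : t ≠ 0 := (posRootSubInv_pos _).ne'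
    rw [ha1]
    simp only [eval_mul, eval_C, eval_sub, eval_pow, eval_X, eval_one]
    rw [show t ^ 2 - 1 = t * (t - t⁻¹) by field_simp, hsub]
    field_simp
  set s : ℂ := ((t * sin θ / r : ℝ) : ℂ) * Complex.I
  have hs : s ^ 2 = Complex.ofRealHom (p.eval t) := by
    rw [eval_posRootSubInv_mul_cos_eq_neg_sq hβ hp, mul_pow, Complex.I_sq,
      Complex.ofRealHom_eq_coe]
    push_cast
    ring
  have h := AdjoinRoot.map_add_mul_sqrt_pow hdef (Complex.ofRealHom.comp (evalRingHom t)) hs n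
  simp only [RingHom.comp_apply, coe_evalRingHom, Complex.ofRealHom_eq_coe, ha1t, hb0, eval_C] at h
  have hbase : ((t * cos θ : ℝ) : ℂ) + (r : ℂ) * s =
      t * (Complex.cos θ + Complex.sin θ * Complex.I) := by
    have : (r : ℂ) ≠ 0 := Complex.ofReal_ne_zero.2 hr.ne'
    simp only [s]
    push_cast
    field_simp
  rw [hbase, mul_pow, Complex.cos_add_sin_mul_I_pow, ← Complex.ofReal_natCast, ← Complex.ofReal_mul,
    ← Complex.ofReal_cos, ← Complex.ofReal_sin, ← Complex.ofReal_pow] at h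
  simpa only [s, Complex.add_re, Complex.mul_re, Complex.ofReal_re, Complex.ofReal_im,
    Complex.I_re, Complex.I_im, mul_zero, mul_one, sub_zero, zero_mul, add_zero, sub_self]
    using congrArg Complex.re h

lemma posRootSubInv_sqrt_two_mul_sub_one {β : ℝ} (hβ : 1 < β) :
    posRootSubInv (√(2 * (β - 1))) = (√(β + 1) + √(β - 1)) / √2 ∧
      posRootSubInv (-√(2 * (β - 1))) = (√(β + 1) - √(β - 1)) / √2 := by
  have hs : √(β + 1) ^ 2 = β + 1 := sq_sqrt (by linarith)
  have hr : √(β - 1) ^ 2 = β - 1 := sq_sqrt (by linarith)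
  have hq : √2 ^ 2 = 2 := sq_sqrt (by norm_num)
  have hq0 : 0 < √2 := by positivity
  have hrs : √(β - 1) < √(β + 1) := sqrt_lt_sqrt (by linarith) (by linarith)
  have hprod : (√(β + 1) - √(β - 1)) / √2 * ((√(β + 1) + √(β - 1)) / √2) = 1 := by
    field_simp
    linear_combination hs - hr - hq
  have hdiff :
      (√(β + 1) + √(β - 1)) / √2 - (√(β + 1) - √(β - 1)) / √2 = √(2 * (β - 1)) := by
    rw [sqrt_mul zero_le_two]
    field_simp
    linear_combination -√(β - 1) * hq
  constructor
  · rw [← hdiff]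
    exact posRootSubInv_sub_of_mul_eq_one (by positivity) hprod
  · rw [← hdiff, neg_sub]
    exact posRootSubInv_sub_of_mul_eq_one (div_pos (by linarith) hq0) (by rw [mul_comm, hprod])

theorem integral_djkm_eq_integral_cos_mul_cos {β : ℝ} (hβ : 1 < β) (A : ℕ → ℝ[X])
    (hA : ∀ (k : ℕ) (θ : ℝ), (A k).eval (posRootSubInv (√(2 * (β - 1)) * cos θ)) =
      posRootSubInv (√(2 * (β - 1)) * cos θ) ^ k * cos (k * θ))
    (n m : ℕ) :
    (∫ t in ((√(β + 1) - √(β - 1)) / √2)..((√(β + 1) + √(β - 1)) / √2),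
        (A n).eval t * (A m).eval t * (t ^ 2 + 1) *
          √((1 - β) / (t ^ 4 - 2 * β * t ^ 2 + 1)) / t ^ (n + m + 1)) =
      √(β - 1) * ∫ θ in 0..π, cos (n * θ) * cos (m * θ) := by
  set K := √(2 * (β - 1))
  have hK : 0 < K := sqrt_pos.2 (by linarith)
  have hK2 : K ^ 2 = 2 * (β - 1) := sq_sqrt (by linarith)
  obtain ⟨hright, hleft⟩ := posRootSubInv_sqrt_two_mul_sub_one hβ
  rw [← hright, ← hleft, ← intervalIntegral.integral_const_mul]
  refine integral_posRootSubInv_mul_cos hK fun θ hθ => ?_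
  rw [hA, hA]
  set t := posRootSubInv (K * cos θ)
  have ht : 0 < t := posRootSubInv_pos _
  have hsin : 0 < sin θ := sin_pos_of_pos_of_lt_pi hθ.1 hθ.2
  have hsqrt : √((1 - β) / (t ^ 4 - 2 * β * t ^ 2 + 1)) = √(β - 1) / (K * t * sin θ) := by
    rw [quartic_posRootSubInv_mul_cos hK2 θ, div_neg, ← neg_div, neg_sub,
      sqrt_div' _ (sq_nonneg _), sqrt_sq (by positivity)]
  rw [hsqrt, pow_succ, pow_add]
  field_simp
  ring

/-- Orthogonality of the first-kind family in the DJKM setting. -/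
theorem djkm_orthogonality_first (β : ℝ) (hβ : 1 < β)
    (p : Polynomial ℝ)
    (hp : p = C ((β ^ 2 - 1)⁻¹) * (X ^ 4 - C (2 * β) * X ^ 2 + 1))
    (a b : ℕ → Polynomial ℝ)
    (ha1 : a 1 = C (Real.sqrt (2 * (β - 1)))⁻¹ * (X ^ 2 - 1))
    (hb0 : b 0 = C (Real.sqrt ((β + 1) / 2)))
    (ha0 : a 0 = 1)
    (hdef : ∀ n : ℕ,
      AdjoinRoot.of ((X : Polynomial (Polynomial ℝ)) ^ 2 - C p) (a (n + 1)) +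
        AdjoinRoot.of (X ^ 2 - C p) (b n) * AdjoinRoot.root (X ^ 2 - C p) =
      (AdjoinRoot.of (X ^ 2 - C p) (a 1) +
        AdjoinRoot.of (X ^ 2 - C p) (b 0) * AdjoinRoot.root (X ^ 2 - C p)) ^ (n + 1)) :
    ∀ n m : ℕ,
      (n ≠ m →
        (∫ t in ((Real.sqrt (β + 1) - Real.sqrt (β - 1)) / Real.sqrt 2)..((Real.sqrt (β + 1) + Real.sqrt (β - 1)) / Real.sqrt 2),
          (a n).eval t * (a m).eval t * (t ^ 2 + 1) *
            Real.sqrt ((1 - β) / (t ^ 4 - 2 * β * t ^ 2 + 1)) / t ^ (n + m + 1)) = 0) ∧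
      (n = 0 → m = 0 →
        (∫ t in ((Real.sqrt (β + 1) - Real.sqrt (β - 1)) / Real.sqrt 2)..((Real.sqrt (β + 1) + Real.sqrt (β - 1)) / Real.sqrt 2),
          (a n).eval t * (a m).eval t * (t ^ 2 + 1) *
            Real.sqrt ((1 - β) / (t ^ 4 - 2 * β * t ^ 2 + 1)) / t ^ (n + m + 1)) = Real.pi * Real.sqrt (β - 1)) ∧
      (n = m → n ≠ 0 →
        (∫ t in ((Real.sqrt (β + 1) - Real.sqrt (β - 1)) / Real.sqrt 2)..((Real.sqrt (β + 1) + Real.sqrt (β - 1)) / Real.sqrt 2),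
          (a n).eval t * (a m).eval t * (t ^ 2 + 1) *
            Real.sqrt ((1 - β) / (t ^ 4 - 2 * β * t ^ 2 + 1)) / t ^ (n + m + 1)) = Real.pi / 2 * Real.sqrt (β - 1)) := by
  intro n m
  have hA := eval_posRootSubInv_mul_cos_eq_pow_mul_cos hβ hp ha1 hb0 ha0 hdef
  rw [integral_djkm_eq_integral_cos_mul_cos hβ a hA n m, integral_cos_nat_mul_mul_cos_nat_mul]
  refine ⟨fun hnm => ?_, fun hn hm => ?_, fun hnm hn => ?_⟩
  · rw [if_neg hnm, mul_zero]
  · rw [if_pos (hn.trans hm.symm), if_pos hn, mul_comm]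
  · rw [if_pos hnm, if_neg hn, mul_comm]
end

section
/- (Orthogonality of second-kind family) With β > 1 real and the DJKM data as above, ∫ from t = (√(β+1) − √(β−1))/√2 to (√(β+1) + √(β−1))/√2 of t^{−n−m−3}·bₘ(t)·bₙ(t)·(t²+1)·√((t⁴ − 2βt² + 1)/(1−β)) dt equals 0 if n ≠ m and (π/2)(β+1)√(β−1) if n = m. -/
/-!
The generator `a₁ + b₀√p` has norm `a₁² - p b₀² = t²`, so the `√p`-coefficients of its powers
satisfy the Chebyshev recurrence `b_{k+1} = 2 a₁ b_k - t² b_{k-1}`; hence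
`b_k(t) = b₀ t^k U_k(u)` with `u = a₁ / t = (t² - 1) / (√(2(β-1)) t)`. The substitution `t ↦ u`
maps the interval of integration onto `[-1, 1]` and turns `(t² + 1) √(...) / t³ dt` into a
multiple of `√(1 - u²) du`, so the claim is the orthogonality of the `U_k` for the weight
`√(1 - u²)`, which in turn follows from `U_k(cos θ) sin θ = sin((k+1)θ)`.
-/

open Polynomial Real intervalIntegral

namespace Polynomial.Chebyshev

open MeasureTheory

theorem eq_mul_pow_mul_eval_U_of_recurrence {R : Type*} [CommRing R] {f : ℕ → R} {s x u : R}
    (h0 : f 0 = s) (h1 : f 1 = 2 * (x * u) * s)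
    (hrec : ∀ k, f (k + 2) = 2 * (x * u) * f (k + 1) - x ^ 2 * f k) (k : ℕ) :
    f k = s * x ^ k * (U R k).eval u := by
  induction k using Nat.twoStepInduction with
  | zero => simp [h0]
  | one =>
    rw [h1, Nat.cast_one, U_one]
    simp only [eval_mul, eval_ofNat, eval_X, pow_one]
    ring
  | more k ih₀ ih₁ =>
    have hU : (U R ((k + 2 : ℕ) : ℤ)).eval u =
        2 * u * (U R ((k + 1 : ℕ) : ℤ)).eval u - (U R (k : ℤ)).eval u := by
      push_cast
      rw [U_add_two]
      simp only [eval_sub, eval_mul, eval_ofNat, eval_X]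
    rw [hrec, ih₀, ih₁, hU]
    ring

theorem sin_mul_sin_eq_eval_T_cos (m n : ℕ) (θ : ℝ) :
    sin ((m + 1) * θ) * sin ((n + 1) * θ) =
      ((T ℝ ((m : ℤ) - n)).eval (cos θ) - (T ℝ ((m : ℤ) + n + 2)).eval (cos θ)) / 2 := by
  rw [T_real_cos, T_real_cos]
  push_cast
  rw [show ((m : ℝ) - n) * θ = (m + 1) * θ - (n + 1) * θ by ring,
    show ((m : ℝ) + n + 2) * θ = (m + 1) * θ + (n + 1) * θ by ring, cos_sub, cos_add]
  ring

theorem integral_eval_U_mul_eval_U_mul_sqrt (m n : ℕ) :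
    ∫ x in (-1)..1, (U ℝ m).eval x * (U ℝ n).eval x * √(1 - x ^ 2) =
      if m = n then π / 2 else 0 := by
  have hT : ∀ k : ℤ, Integrable (fun x => (T ℝ k).eval x) measureT :=
    fun k => integrable_measureT (by fun_prop)
  calc ∫ x in (-1)..1, (U ℝ m).eval x * (U ℝ n).eval x * √(1 - x ^ 2)
      = ∫ x, (U ℝ m).eval x * (U ℝ n).eval x * (1 - x ^ 2) ∂measureT := by
        rw [integral_measureT]
        congr 1 with x
        rw [Real.sqrt_inv, mul_assoc _ (1 - x ^ 2), ← div_eq_mul_inv, Real.div_sqrt]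
    _ = ∫ x, ((T ℝ ((m : ℤ) - n)).eval x - (T ℝ ((m : ℤ) + n + 2)).eval x) / 2 ∂measureT := by
        rw [integral_measureT_eq_integral_cos, integral_measureT_eq_integral_cos]
        congr 1 with θ
        rw [← sin_mul_sin_eq_eval_T_cos, ← sin_sq]
        have hm := U_real_cos θ m
        have hn := U_real_cos θ n
        push_cast at hm hn
        rw [← hm, ← hn]
        ring
    _ = if m = n then π / 2 else 0 := by
        rw [MeasureTheory.integral_div, integral_sub (hT _) (hT _),
          integral_eval_T_real_measureT_of_ne_zero (n := m + n + 2) (by omega)]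
        split_ifs with h
        · rw [h, sub_self, integral_eval_T_real_measureT_zero]
          ring
        · rw [integral_eval_T_real_measureT_of_ne_zero (by omega)]
          ring

end Polynomial.Chebyshev

namespace AdjoinRoot

variable {R : Type*} [CommRing R] {p : R}

theorem root_sq_X_sq_sub_C : root (X ^ 2 - C p) ^ 2 = of (X ^ 2 - C p) p := by
  have := mk_self (f := (X ^ 2 - C p : R[X]))
  rw [map_sub, map_pow, mk_X, mk_C, sub_eq_zero] at this
  exact this

theorem of_add_of_mul_root_inj_s18 [Nontrivial R] {x y x' y' : R} :
    of (X ^ 2 - C p) x + of (X ^ 2 - C p) y * root (X ^ 2 - C p) =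
        of (X ^ 2 - C p) x' + of (X ^ 2 - C p) y' * root (X ^ 2 - C p) ↔
      x = x' ∧ y = y' := by
  refine ⟨fun h => ?_, by rintro ⟨rfl, rfl⟩; rfl⟩
  have hmonic : (X ^ 2 - C p : R[X]).Monic := monic_X_pow_sub_C p two_ne_zero
  have hlin : ∀ x y : R, modByMonicHom hmonic
      (of (X ^ 2 - C p) x + of (X ^ 2 - C p) y * root (X ^ 2 - C p)) = C y * X + C x := by
    intro x y
    have hmk : mk (X ^ 2 - C p) (C y * X + C x) =
        of (X ^ 2 - C p) x + of (X ^ 2 - C p) y * root (X ^ 2 - C p) := by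
      rw [add_comm]
      simp only [map_add, map_mul, mk_X, mk_C]
    rw [← hmk, modByMonicHom_mk, modByMonic_eq_self_iff hmonic, degree_X_pow_sub_C two_pos]
    exact degree_linear_le.trans_lt (by norm_num)
  have h' := congrArg (modByMonicHom hmonic) h
  rw [hlin, hlin] at h'
  exact ⟨by simpa using congrArg (coeff · 0) h', by simpa using congrArg (coeff · 1) h'⟩

end AdjoinRoot

section PowerCoefficients

open AdjoinRoot

variable {R : Type*} [CommRing R] [Nontrivial R] {p : R} {a b : ℕ → R}

/-- `a n + b (n - 1) √p = (a 1 + b 0 √p) ^ n` in `R[√p] = R[X] / (X² - p)`, for `n ≥ 1`. -/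
def IsPowerCoeffs (p : R) (a b : ℕ → R) : Prop :=
  ∀ n : ℕ, of (X ^ 2 - C p) (a (n + 1)) + of (X ^ 2 - C p) (b n) * root (X ^ 2 - C p) =
    (of (X ^ 2 - C p) (a 1) + of (X ^ 2 - C p) (b 0) * root (X ^ 2 - C p)) ^ (n + 1)

theorem IsPowerCoeffs.b_one (hpow : IsPowerCoeffs p a b) : b 1 = 2 * a 1 * b 0 := by
  refine (of_add_of_mul_root_inj_s18 (p := p) (x := a 2) (x' := a 1 ^ 2 + p * b 0 ^ 2)).mp ?_ |>.2
  rw [hpow 1]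
  simp only [map_add, map_mul, map_pow, map_ofNat]
  linear_combination (of (X ^ 2 - C p) (b 0)) ^ 2 * root_sq_X_sq_sub_C (p := p)

theorem IsPowerCoeffs.b_add_two (hpow : IsPowerCoeffs p a b) (k : ℕ) :
    b (k + 2) = 2 * a 1 * b (k + 1) - (a 1 ^ 2 - p * b 0 ^ 2) * b k := by
  set z := of (X ^ 2 - C p) (a 1) + of (X ^ 2 - C p) (b 0) * root (X ^ 2 - C p)
  set N := a 1 ^ 2 - p * b 0 ^ 2
  -- Cayley–Hamilton for multiplication by `z`: trace `2 a₁`, norm `N`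
  have hz : z ^ 2 = 2 * of (X ^ 2 - C p) (a 1) * z - of (X ^ 2 - C p) N := by
    simp only [z, N, map_sub, map_mul, map_pow]
    linear_combination (of (X ^ 2 - C p) (b 0)) ^ 2 * root_sq_X_sq_sub_C (p := p)
  refine (of_add_of_mul_root_inj_s18 (p := p) (x := a (k + 3))
    (x' := 2 * a 1 * a (k + 2) - N * a (k + 1))).mp ?_ |>.2
  simp only [map_sub, map_mul, map_ofNat]
  linear_combination hpow (k + 2) - 2 * of (X ^ 2 - C p) (a 1) * hpow (k + 1)
    + of (X ^ 2 - C p) N * hpow k + z ^ (k + 1) * hz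

theorem IsPowerCoeffs.eval_b_eq_mul_pow_mul_eval_U {p : R[X]} {a b : ℕ → R[X]}
    (hpow : IsPowerCoeffs p a b) (hnorm : a 1 ^ 2 - p * b 0 ^ 2 = X ^ 2) {t u : R}
    (ha1 : (a 1).eval t = t * u) (k : ℕ) :
    (b k).eval t = (b 0).eval t * t ^ k * (Chebyshev.U R k).eval u := by
  refine Chebyshev.eq_mul_pow_mul_eval_U_of_recurrence (f := fun k => (b k).eval t) rfl ?_ ?_ k
  · rw [hpow.b_one, eval_mul, eval_mul, ha1, eval_ofNat]
  · intro k
    rw [hpow.b_add_two k, hnorm]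
    simp only [eval_sub, eval_mul, eval_pow, eval_X, eval_ofNat, ha1]

end PowerCoefficients

theorem hasDerivAt_sq_sub_one_div_mul {c t : ℝ} (hc : c ≠ 0) (ht : t ≠ 0) :
    HasDerivAt (fun t => (t ^ 2 - 1) / (c * t)) ((t ^ 2 + 1) / (c * t ^ 2)) t := by
  refine (((hasDerivAt_pow 2 t).sub_const 1).div ((hasDerivAt_id t).const_mul c)
    (mul_ne_zero hc ht)).congr_deriv ?_
  simp only [id]
  field_simp
  ring

theorem integral_comp_sq_sub_one_div_mul {c t₀ t₁ : ℝ} (hc : c ≠ 0) (h₀ : 0 < t₀) (h₁ : 0 < t₁)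
    {g : ℝ → ℝ} (hg : Continuous g) :
    ∫ t in t₀..t₁, (t ^ 2 + 1) / (c * t ^ 2) * g ((t ^ 2 - 1) / (c * t)) =
      ∫ u in (t₀ ^ 2 - 1) / (c * t₀)..(t₁ ^ 2 - 1) / (c * t₁), g u := by
  have hpos : ∀ t ∈ Set.uIcc t₀ t₁, t ≠ 0 := fun t ht => ((lt_min h₀ h₁).trans_le ht.1).ne'
  exact integral_deriv_smul_comp (fun t ht => hasDerivAt_sq_sub_one_div_mul hc (hpos t ht))
    (ContinuousOn.div (by fun_prop) (by fun_prop)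
      (fun t ht => mul_ne_zero hc (pow_ne_zero 2 (hpos t ht)))) hg

theorem sq_sub_one_div_mul_eq_neg_one {q r : ℝ} (hqr : r ^ 2 - q ^ 2 = 2) (hq : q ≠ 0)
    (hne : r ≠ q) :
    (((r - q) / √2) ^ 2 - 1) / (√2 * q * ((r - q) / √2)) = -1 := by
  have h2 : √2 ^ 2 = 2 := sq_sqrt zero_le_two
  have : r - q ≠ 0 := sub_ne_zero.mpr hne
  rw [div_pow, h2]
  field_simp
  linear_combination hqr

theorem sq_sub_one_div_mul_eq_one {q r : ℝ} (hqr : r ^ 2 - q ^ 2 = 2) (hq : q ≠ 0)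
    (hne : r + q ≠ 0) :
    (((r + q) / √2) ^ 2 - 1) / (√2 * q * ((r + q) / √2)) = 1 := by
  have h2 : √2 ^ 2 = 2 := sq_sqrt zero_le_two
  rw [div_pow, h2]
  field_simp
  linear_combination hqr

theorem sqrt_quartic_div_eq {β c t : ℝ} (hβ : β ≠ 1) (hc : c ^ 2 = 2 * (β - 1)) (ht : 0 < t) :
    √((t ^ 4 - 2 * β * t ^ 2 + 1) / (1 - β)) = √2 * t * √(1 - ((t ^ 2 - 1) / (c * t)) ^ 2) := by
  have hc0 : c ≠ 0 := by
    rintro rfl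
    exact hβ (by linarith)
  have h1β : (1 : ℝ) - β ≠ 0 := sub_ne_zero.mpr (Ne.symm hβ)
  have hsplit : (t ^ 4 - 2 * β * t ^ 2 + 1) / (1 - β) =
      (√2 * t) ^ 2 * (1 - ((t ^ 2 - 1) / (c * t)) ^ 2) := by
    rw [mul_pow, sq_sqrt zero_le_two]
    field_simp
    rw [hc]
    ring
  rw [hsplit, sqrt_mul (sq_nonneg _), sqrt_sq (by positivity)]

section DJKM

variable {β : ℝ}

theorem djkm_generator_norm (hβ : 1 < β) :
    (C (√(2 * (β - 1)))⁻¹ * (X ^ 2 - 1)) ^ 2 -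
        C ((β ^ 2 - 1)⁻¹) * (X ^ 4 - C (2 * β) * X ^ 2 + 1) * C (√((β + 1) / 2)) ^ 2 =
      (X ^ 2 : ℝ[X]) := by
  refine Polynomial.funext fun t => ?_
  have hβ₁ : β - 1 ≠ 0 := sub_ne_zero.mpr hβ.ne'
  have hβ₂ : β ^ 2 - 1 ≠ 0 := by nlinarith
  have hc : √(2 * (β - 1)) ^ 2 = 2 * (β - 1) := sq_sqrt (by linarith)
  have hs : √((β + 1) / 2) ^ 2 = (β + 1) / 2 := sq_sqrt (by linarith)
  simp only [eval_mul, eval_add, eval_sub, eval_pow, eval_C, eval_X, eval_one, mul_pow, inv_pow,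
    hc, hs]
  field_simp
  ring

theorem djkm_lower_endpoint_pos (hβ : 1 < β) : 0 < (√(β + 1) - √(β - 1)) / √2 :=
  div_pos (sub_pos.mpr (sqrt_lt_sqrt (by linarith) (by linarith))) (sqrt_pos.mpr two_pos)

theorem integral_djkm_chebyshev (hβ : 1 < β) (m n : ℕ) :
    ∫ t in ((√(β + 1) - √(β - 1)) / √2)..((√(β + 1) + √(β - 1)) / √2),
      √((β + 1) / 2) * t ^ m * (Chebyshev.U ℝ m).eval ((t ^ 2 - 1) / (√(2 * (β - 1)) * t)) *
        (√((β + 1) / 2) * t ^ n * (Chebyshev.U ℝ n).eval ((t ^ 2 - 1) / (√(2 * (β - 1)) * t))) *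
        (t ^ 2 + 1) * √((t ^ 4 - 2 * β * t ^ 2 + 1) / (1 - β)) / t ^ (n + m + 3) =
      (β + 1) * √(β - 1) * if m = n then π / 2 else 0 := by
  set q := √(β - 1)
  set r := √(β + 1)
  set c := √(2 * (β - 1))
  set W : ℝ → ℝ := fun u => (Chebyshev.U ℝ m).eval u * (Chebyshev.U ℝ n).eval u * √(1 - u ^ 2)
  have hq : 0 < q := sqrt_pos.mpr (by linarith)
  have hqr : r ^ 2 - q ^ 2 = 2 := by
    rw [sq_sqrt (by linarith), sq_sqrt (by linarith)]
    ring
  have hc : c = √2 * q := sqrt_mul zero_le_two _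
  have hcsq : c ^ 2 = 2 * (β - 1) := sq_sqrt (by linarith)
  have hc0 : c ≠ 0 := by positivity
  have h₀ : 0 < (r - q) / √2 := djkm_lower_endpoint_pos hβ
  have h₁ : 0 < (r + q) / √2 := by positivity
  calc _ = ∫ t in (r - q) / √2..(r + q) / √2,
        (β + 1) * q * ((t ^ 2 + 1) / (c * t ^ 2) * W ((t ^ 2 - 1) / (c * t))) := by
        refine integral_congr fun t ht => ?_
        have ht : 0 < t := (lt_min h₀ h₁).trans_le ht.1
        have h2 : √2 ^ 2 = 2 := sq_sqrt zero_le_two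
        have hs : √((β + 1) / 2) ^ 2 = (β + 1) / 2 := sq_sqrt (by linarith)
        simp only [W]
        rw [sqrt_quartic_div_eq (by linarith) hcsq ht, hc, pow_add, pow_add]
        field_simp
        rw [hs, h2]
        ring
    _ = (β + 1) * q * ∫ u in (-1)..1, W u := by
        rw [integral_const_mul, integral_comp_sq_sub_one_div_mul hc0 h₀ h₁ (by fun_prop), hc,
          sq_sub_one_div_mul_eq_neg_one hqr hq.ne' (sqrt_lt_sqrt (by linarith) (by linarith)).ne',
          sq_sub_one_div_mul_eq_one hqr hq.ne' (by positivity)]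
    _ = (β + 1) * q * if m = n then π / 2 else 0 := by
        rw [Chebyshev.integral_eval_U_mul_eval_U_mul_sqrt]

end DJKM

theorem djkm_orthogonality_second_general (β : ℝ) (hβ : 1 < β)
    (p : Polynomial ℝ)
    (hp : p = C ((β ^ 2 - 1)⁻¹) * (X ^ 4 - C (2 * β) * X ^ 2 + 1))
    (a b : ℕ → Polynomial ℝ)
    (ha1 : a 1 = C (Real.sqrt (2 * (β - 1)))⁻¹ * (X ^ 2 - 1))
    (hb0 : b 0 = C (Real.sqrt ((β + 1) / 2)))
    (hdef : ∀ n : ℕ,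
      AdjoinRoot.of ((X : Polynomial (Polynomial ℝ)) ^ 2 - C p) (a (n + 1)) +
        AdjoinRoot.of (X ^ 2 - C p) (b n) * AdjoinRoot.root (X ^ 2 - C p) =
      (AdjoinRoot.of (X ^ 2 - C p) (a 1) +
        AdjoinRoot.of (X ^ 2 - C p) (b 0) * AdjoinRoot.root (X ^ 2 - C p)) ^ (n + 1)) :
    ∀ n m : ℕ,
      (n ≠ m →
        (∫ t in ((Real.sqrt (β + 1) - Real.sqrt (β - 1)) / Real.sqrt 2)..((Real.sqrt (β + 1) + Real.sqrt (β - 1)) / Real.sqrt 2),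
          (b m).eval t * (b n).eval t * (t ^ 2 + 1) *
            Real.sqrt ((t ^ 4 - 2 * β * t ^ 2 + 1) / (1 - β)) / t ^ (n + m + 3)) = 0) ∧
      (n = m →
        (∫ t in ((Real.sqrt (β + 1) - Real.sqrt (β - 1)) / Real.sqrt 2)..((Real.sqrt (β + 1) + Real.sqrt (β - 1)) / Real.sqrt 2),
          (b m).eval t * (b n).eval t * (t ^ 2 + 1) *
            Real.sqrt ((t ^ 4 - 2 * β * t ^ 2 + 1) / (1 - β)) / t ^ (n + m + 3)) = Real.pi / 2 * (β + 1) * Real.sqrt (β - 1)) := by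
  have hnorm : a 1 ^ 2 - p * b 0 ^ 2 = X ^ 2 := by
    rw [ha1, hb0, hp]
    exact djkm_generator_norm hβ
  have hb : ∀ k (t : ℝ), t ≠ 0 → (b k).eval t =
      √((β + 1) / 2) * t ^ k * (Chebyshev.U ℝ k).eval ((t ^ 2 - 1) / (√(2 * (β - 1)) * t)) := by
    intro k t ht
    have ha1t : (a 1).eval t = t * ((t ^ 2 - 1) / (√(2 * (β - 1)) * t)) := by
      rw [ha1]
      simp only [eval_mul, eval_C, eval_sub, eval_pow, eval_X, eval_one]
      field_simp
    rw [IsPowerCoeffs.eval_b_eq_mul_pow_mul_eval_U hdef hnorm ha1t, hb0, eval_C]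
  intro n m
  have hI : ∫ t in ((√(β + 1) - √(β - 1)) / √2)..((√(β + 1) + √(β - 1)) / √2),
      (b m).eval t * (b n).eval t * (t ^ 2 + 1) *
        √((t ^ 4 - 2 * β * t ^ 2 + 1) / (1 - β)) / t ^ (n + m + 3) =
      (β + 1) * √(β - 1) * if m = n then π / 2 else 0 := by
    rw [← integral_djkm_chebyshev hβ m n]
    refine integral_congr fun t ht => ?_
    have ht : t ≠ 0 := ((lt_min (djkm_lower_endpoint_pos hβ) (by positivity)).trans_le ht.1).ne'
    simp only [hb m t ht, hb n t ht]
  refine ⟨fun h => ?_, fun h => ?_⟩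
  · rw [hI, if_neg (Ne.symm h), mul_zero]
  · rw [hI, if_pos h.symm]
    ring

/-- Orthogonality of the second-kind family in the DJKM setting. -/
theorem djkm_orthogonality_second (β : ℝ) (hβ : 1 < β)
    (p : Polynomial ℝ)
    (hp : p = C ((β ^ 2 - 1)⁻¹) * (X ^ 4 - C (2 * β) * X ^ 2 + 1))
    (a b : ℕ → Polynomial ℝ)
    (ha1 : a 1 = C (Real.sqrt (2 * (β - 1)))⁻¹ * (X ^ 2 - 1))
    (hb0 : b 0 = C (Real.sqrt ((β + 1) / 2)))
    (ha0 : a 0 = 1)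
    (hdef : ∀ n : ℕ,
      AdjoinRoot.of ((X : Polynomial (Polynomial ℝ)) ^ 2 - C p) (a (n + 1)) +
        AdjoinRoot.of (X ^ 2 - C p) (b n) * AdjoinRoot.root (X ^ 2 - C p) =
      (AdjoinRoot.of (X ^ 2 - C p) (a 1) +
        AdjoinRoot.of (X ^ 2 - C p) (b 0) * AdjoinRoot.root (X ^ 2 - C p)) ^ (n + 1)) :
    ∀ n m : ℕ,
      (n ≠ m →
        (∫ t in ((Real.sqrt (β + 1) - Real.sqrt (β - 1)) / Real.sqrt 2)..((Real.sqrt (β + 1) + Real.sqrt (β - 1)) / Real.sqrt 2),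
          (b m).eval t * (b n).eval t * (t ^ 2 + 1) *
            Real.sqrt ((t ^ 4 - 2 * β * t ^ 2 + 1) / (1 - β)) / t ^ (n + m + 3)) = 0) ∧
      (n = m →
        (∫ t in ((Real.sqrt (β + 1) - Real.sqrt (β - 1)) / Real.sqrt 2)..((Real.sqrt (β + 1) + Real.sqrt (β - 1)) / Real.sqrt 2),
          (b m).eval t * (b n).eval t * (t ^ 2 + 1) *
            Real.sqrt ((t ^ 4 - 2 * β * t ^ 2 + 1) / (1 - β)) / t ^ (n + m + 3)) = Real.pi / 2 * (β + 1) * Real.sqrt (β - 1)) :=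
  djkm_orthogonality_second_general β hβ p hp a b ha1 hb0 hdef
end

section
/- (Endpoint values, Shabat-type property) In the DJKM setting with parameter β ≠ ±1, for all n ≥ 0, bₙ(1) = bₙ(−1) = (−1)^{n/2}·√((β+1)/2) if n is even, and bₙ(1) = bₙ(−1) = 0 if n is odd. Here for even n, (−1)^{n/2} means (−1) raised to n/2. -/
open Polynomial

/-!
At `t = ±1` the polynomial `a₁` vanishes and `p(±1) = -2/(β+1) = -1/c²`, so `r = i/c` is a square
root of `p(±1)` with `c r = i`. Specialising `t ↦ ±1`, `√p ↦ ±r` in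
`aₙ₊₁ + bₙ √p = (a₁ + c √p)ⁿ⁺¹` gives `aₙ₊₁(±1) ± bₙ(±1) r = (±i)ⁿ⁺¹`, whence
`bₙ(±1) = c (iⁿ + (-i)ⁿ) / 2`.
-/

theorem eval_add_eval_mul_eq_pow_of_adjoinRoot {R : Type*} [CommRing R] {p x y u v : R[X]}
    {n : ℕ}
    (h : AdjoinRoot.of (X ^ 2 - C p) x +
        AdjoinRoot.of (X ^ 2 - C p) y * AdjoinRoot.root (X ^ 2 - C p) =
      (AdjoinRoot.of (X ^ 2 - C p) u +
        AdjoinRoot.of (X ^ 2 - C p) v * AdjoinRoot.root (X ^ 2 - C p)) ^ n)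
    {t r : R} (hr : r ^ 2 = p.eval t) :
    x.eval t + y.eval t * r = (u.eval t + v.eval t * r) ^ n := by
  have hroot : (X ^ 2 - C p).eval₂ (evalRingHom t) r = 0 := by simp [hr]
  simpa using congrArg (AdjoinRoot.lift (evalRingHom t) r hroot) h

namespace Complex

theorem I_pow_add_neg_I_pow_of_even {n : ℕ} (hn : Even n) :
    I ^ n + (-I) ^ n = 2 * (-1) ^ (n / 2) := by
  rw [hn.neg_pow, ← two_mul]
  obtain ⟨k, rfl⟩ := hn
  rw [← two_mul, Nat.mul_div_cancel_left k two_pos, pow_mul, I_sq]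

theorem I_pow_add_neg_I_pow_of_odd {n : ℕ} (hn : Odd n) : I ^ n + (-I) ^ n = 0 := by
  rw [hn.neg_pow, add_neg_cancel]

end Complex

theorem eval_eq_of_mul_sqrt_eq_I {p : ℂ[X]} {a b : ℕ → ℂ[X]} {c t r : ℂ}
    (hdef : ∀ n : ℕ,
      AdjoinRoot.of (X ^ 2 - C p) (a (n + 1)) +
        AdjoinRoot.of (X ^ 2 - C p) (b n) * AdjoinRoot.root (X ^ 2 - C p) =
      (AdjoinRoot.of (X ^ 2 - C p) (a 1) +
        AdjoinRoot.of (X ^ 2 - C p) (b 0) * AdjoinRoot.root (X ^ 2 - C p)) ^ (n + 1))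
    (hb0 : b 0 = C c) (ha1 : (a 1).eval t = 0) (hr : r ^ 2 = p.eval t) (hcr : c * r = Complex.I)
    (n : ℕ) :
    (b n).eval t = c * ((Complex.I ^ n + (-Complex.I) ^ n) / 2) := by
  have hplus := eval_add_eval_mul_eq_pow_of_adjoinRoot (hdef n) hr
  have hminus := eval_add_eval_mul_eq_pow_of_adjoinRoot (hdef n) (r := -r) (by rwa [neg_sq])
  rw [ha1, hb0, eval_C, zero_add, hcr] at hplus
  rw [ha1, hb0, eval_C, zero_add, mul_neg c r, hcr] at hminus
  have hr0 : r ≠ 0 := right_ne_zero_of_mul (hcr ▸ Complex.I_ne_zero)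
  apply mul_right_cancel₀ (mul_ne_zero two_ne_zero hr0)
  linear_combination hplus - hminus - (Complex.I ^ n + (-Complex.I) ^ n) * hcr

theorem sq_I_div_eq_eval_of_sq_eq_one {β c t : ℂ} (hβ1 : β ≠ 1) (hβ2 : β ≠ -1)
    (hc : c ^ 2 = (β + 1) / 2) (ht : t ^ 2 = 1) :
    (Complex.I / c) ^ 2 = (C ((β ^ 2 - 1)⁻¹) * (X ^ 4 - C (2 * β) * X ^ 2 + 1)).eval t := by
  have hβ2' : β + 1 ≠ 0 := by rwa [← sub_neg_eq_add, sub_ne_zero]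
  have hβ : β ^ 2 - 1 ≠ 0 := by
    rw [show β ^ 2 - 1 = (β - 1) * (β + 1) by ring]
    exact mul_ne_zero (sub_ne_zero.mpr hβ1) hβ2'
  have ht4 : t ^ 4 = 1 := by rw [show t ^ 4 = (t ^ 2) ^ 2 by ring, ht, one_pow]
  simp only [eval_mul, eval_add, eval_sub, eval_pow, eval_C, eval_X, eval_one, ht, ht4, div_pow,
    Complex.I_sq, hc]
  field_simp
  ring

theorem djkm_endpoint_values_general (β s c : ℂ) (hβ1 : β ≠ 1) (hβ2 : β ≠ -1)
    (hc : c ^ 2 = (β + 1) / 2)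
    (p : Polynomial ℂ)
    (hp : p = C ((β ^ 2 - 1)⁻¹) * (X ^ 4 - C (2 * β) * X ^ 2 + 1))
    (a b : ℕ → Polynomial ℂ)
    (ha1 : a 1 = C s⁻¹ * (X ^ 2 - 1))
    (hb0 : b 0 = C c)
    (hdef : ∀ n : ℕ,
      AdjoinRoot.of ((X : Polynomial (Polynomial ℂ)) ^ 2 - C p) (a (n + 1)) +
        AdjoinRoot.of (X ^ 2 - C p) (b n) * AdjoinRoot.root (X ^ 2 - C p) =
      (AdjoinRoot.of (X ^ 2 - C p) (a 1) +
        AdjoinRoot.of (X ^ 2 - C p) (b 0) * AdjoinRoot.root (X ^ 2 - C p)) ^ (n + 1)) :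
    ∀ n : ℕ,
      (b n).eval 1 = (b n).eval (-1) ∧
      (Even n → (b n).eval 1 = (-1) ^ (n / 2) * c) ∧
      (Odd n → (b n).eval 1 = 0) := by
  have hc0 : c ≠ 0 := by
    rintro rfl
    exact hβ2 (by linear_combination -2 * hc)
  have hb (t : ℂ) (ht : t ^ 2 = 1) (n : ℕ) :
      (b n).eval t = c * ((Complex.I ^ n + (-Complex.I) ^ n) / 2) :=
    eval_eq_of_mul_sqrt_eq_I hdef hb0 (by simp [ha1, ht])
      (hp ▸ sq_I_div_eq_eval_of_sq_eq_one hβ1 hβ2 hc ht) (mul_div_cancel₀ _ hc0) n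
  intro n
  rw [hb 1 (one_pow 2), hb (-1) (by norm_num)]
  refine ⟨rfl, fun hn ↦ ?_, fun hn ↦ ?_⟩
  · rw [Complex.I_pow_add_neg_I_pow_of_even hn]
    ring
  · rw [Complex.I_pow_add_neg_I_pow_of_odd hn, zero_div, mul_zero]

/-- Endpoint values of the `bₙ` in the DJKM setting (Shabat-type property). -/
theorem djkm_endpoint_values (β s c : ℂ) (hβ1 : β ≠ 1) (hβ2 : β ≠ -1)
    (hs : s ^ 2 = 2 * (β - 1)) (hc : c ^ 2 = (β + 1) / 2)
    (p : Polynomial ℂ)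
    (hp : p = C ((β ^ 2 - 1)⁻¹) * (X ^ 4 - C (2 * β) * X ^ 2 + 1))
    (a b : ℕ → Polynomial ℂ)
    (ha1 : a 1 = C s⁻¹ * (X ^ 2 - 1))
    (hb0 : b 0 = C c)
    (ha0 : a 0 = 1)
    (hdef : ∀ n : ℕ,
      AdjoinRoot.of ((X : Polynomial (Polynomial ℂ)) ^ 2 - C p) (a (n + 1)) +
        AdjoinRoot.of (X ^ 2 - C p) (b n) * AdjoinRoot.root (X ^ 2 - C p) =
      (AdjoinRoot.of (X ^ 2 - C p) (a 1) +
        AdjoinRoot.of (X ^ 2 - C p) (b 0) * AdjoinRoot.root (X ^ 2 - C p)) ^ (n + 1)) :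
    ∀ n : ℕ,
      (b n).eval 1 = (b n).eval (-1) ∧
      (Even n → (b n).eval 1 = (-1) ^ (n / 2) * c) ∧
      (Odd n → (b n).eval 1 = 0) :=
  djkm_endpoint_values_general β s c hβ1 hβ2 hc p hp a b ha1 hb0 hdef
end
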